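/- arXiv:2206.06921 — 14 statements merged into one kernel-verified Lean document; each statement's English description precedes it below -/
import Mathlib

section
/- Let d ≥ 1 and let φ : (0,1) → [0,d] satisfy, for all 0 < λ < θ < 1, the inequalities 0 ≤ (1-λ)φ(λ) - (1-θ)φ(θ) ≤ (θ-λ)φ(λ/θ). Then for any finite sequence 0 < θ₁ < θ₂ < ⋯ < θₙ < 1, one has φ(θ₁) ≤ max{φ(θ₁/θ₂), φ(θ₂/θ₃), …, φ(θ_{n-1}/θₙ), φ(θₙ)}. -/
/-- Auxiliary: telescoping/induction lemma over ℕ-indexed chains. -/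
lemma stmt_0_aux (φ : ℝ → ℝ)
    (hconstr : ∀ l θ : ℝ, 0 < l → l < θ → θ < 1 →
      0 ≤ (1 - l) * φ l - (1 - θ) * φ θ ∧
      (1 - l) * φ l - (1 - θ) * φ θ ≤ (θ - l) * φ (l / θ)) :
    ∀ n (θ : ℕ → ℝ), 0 < θ 0 → θ n < 1 → (∀ i, i < n → θ i < θ (i + 1)) →
      φ (θ 0) ≤ φ (θ n) ∨ ∃ i, i < n ∧ φ (θ 0) ≤ φ (θ i / θ (i + 1)) := by
  intro n
  induction n with
  | zero => intro θ _ _ _; exact Or.inl le_rfl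
  | succ n ih =>
    intro θ h0 h1 hc
    have h01 : θ 0 < θ 1 := hc 0 (Nat.succ_pos n)
    have key : ∀ k, 1 ≤ k → k ≤ n + 1 → θ 1 ≤ θ k := by
      intro k
      induction k with
      | zero => omega
      | succ m ihm =>
        intro _ hle
        rcases Nat.eq_zero_or_pos m with hm | hm
        · subst hm; exact le_rfl
        · exact le_trans (ihm hm (by omega)) (le_of_lt (hc m (by omega)))
    have h1' : θ 1 < 1 := lt_of_le_of_lt (key (n + 1) (by omega) le_rfl) h1
    have h0' : 0 < θ 1 := h0.trans h01
    have tail := ih (fun i => θ (i + 1)) h0' h1 (fun i hi => hc (i + 1) (by omega))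
    obtain ⟨_, hub⟩ := hconstr (θ 0) (θ 1) h0 h01 h1'
    have hpos0 : (0 : ℝ) < 1 - θ 0 := by linarith
    by_cases hcase : φ (θ 1) ≤ φ (θ 0 / θ 1)
    · have hmul : (1 - θ 0) * φ (θ 0) ≤ (1 - θ 0) * φ (θ 0 / θ 1) := by nlinarith
      exact Or.inr ⟨0, Nat.succ_pos n, le_of_mul_le_mul_left hmul hpos0⟩
    · push_neg at hcase
      have hmul : (1 - θ 0) * φ (θ 0) ≤ (1 - θ 0) * φ (θ 1) := by nlinarith
      have hstep : φ (θ 0) ≤ φ (θ 1) := le_of_mul_le_mul_left hmul hpos0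
      rcases tail with h | ⟨i, hi, h⟩
      · exact Or.inl (hstep.trans h)
      · exact Or.inr ⟨i + 1, by omega, hstep.trans h⟩

/-- If φ : (0,1) → [0,d] satisfies the two-sided Assouad-spectrum
constraint, then for any finite chain 0 < θ₁ < ⋯ < θₙ < 1 we have
φ(θ₁) ≤ max{φ(θ₁/θ₂), …, φ(θ_{n-1}/θₙ), φ(θₙ)}. -/
theorem stmt_0 (d : ℕ) (hd : 1 ≤ d) (φ : ℝ → ℝ)
    (hrange : ∀ θ : ℝ, 0 < θ → θ < 1 → 0 ≤ φ θ ∧ φ θ ≤ d)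
    (hconstr : ∀ l θ : ℝ, 0 < l → l < θ → θ < 1 →
      0 ≤ (1 - l) * φ l - (1 - θ) * φ θ ∧
      (1 - l) * φ l - (1 - θ) * φ θ ≤ (θ - l) * φ (l / θ))
    (n : ℕ) (hn : 0 < n) (θ : Fin n → ℝ)
    (hpos : 0 < θ ⟨0, hn⟩) (hlt : θ ⟨n - 1, Nat.sub_lt hn one_pos⟩ < 1)
    (hmono : StrictMono θ) :
    φ (θ ⟨0, hn⟩) ≤
      Finset.univ.sup' (Finset.univ_nonempty_iff.mpr ⟨⟨0, hn⟩⟩)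
        (fun i : Fin n =>
          if h : (i : ℕ) + 1 < n then φ (θ i / θ ⟨(i : ℕ) + 1, h⟩) else φ (θ i)) := by
  set f : Fin n → ℝ := fun i : Fin n =>
    if h : (i : ℕ) + 1 < n then φ (θ i / θ ⟨(i : ℕ) + 1, h⟩) else φ (θ i) with hf
  set Θ : ℕ → ℝ := fun i => θ ⟨min i (n - 1), by omega⟩ with hΘ
  have hΘeq : ∀ i (h : i ≤ n - 1), Θ i = θ ⟨i, by omega⟩ := by
    intro i h
    simp only [hΘ]
    congr 1
    exact Fin.mk.injEq _ _ _ _ ▸ Nat.min_eq_left h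
  have h0 : Θ 0 = θ ⟨0, hn⟩ := hΘeq 0 (Nat.zero_le _)
  have hlast : Θ (n - 1) = θ ⟨n - 1, Nat.sub_lt hn one_pos⟩ := hΘeq (n - 1) le_rfl
  have haux := stmt_0_aux φ hconstr (n - 1) Θ (by rw [h0]; exact hpos)
    (by rw [hlast]; exact hlt)
    (by
      intro i hi
      rw [hΘeq i (by omega), hΘeq (i + 1) (by omega)]
      exact hmono (by simp [Fin.mk_lt_mk]))
  rcases haux with h | ⟨i, hi, h⟩
  · refine le_trans ?_ (Finset.le_sup' f (Finset.mem_univ ⟨n - 1, Nat.sub_lt hn one_pos⟩))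
    rw [h0, hlast] at h
    simpa [hf, dif_neg (show ¬ (n - 1 + 1 < n) by omega)] using h
  · refine le_trans ?_ (Finset.le_sup' f (Finset.mem_univ ⟨i, by omega⟩))
    rw [h0, hΘeq i (by omega), hΘeq (i + 1) (by omega)] at h
    simpa [hf, dif_pos (show i + 1 < n by omega)] using h
end

section
/- Let d ≥ 1 and let φ : (0,1) → [0,d] satisfy, for all 0 < λ < θ < 1, 0 ≤ (1-λ)φ(λ) - (1-θ)φ(θ) ≤ (θ-λ)φ(λ/θ). Then for every θ ∈ (0,1) and every positive integer n, φ(θ) ≤ φ(θ^{1/n}). -/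
/-!
Put `σ = θ^{1/n}`. The upper bound with `λ = σ^{k+1}` and `θ = σ^k` gives
`(1 - σ^{k+1}) φ(σ^{k+1}) ≤ (1 - σ^k) φ(σ^k) + (σ^k - σ^{k+1}) φ(σ)`,
which telescopes to `(1 - σ^n) φ(σ^n) ≤ (1 - σ^n) φ(σ)`; divide by `1 - θ > 0`.
-/

section

variable {φ : ℝ → ℝ}
  (hφ : ∀ l θ : ℝ, 0 < l → l < θ → θ < 1 →
    (1 - l) * φ l - (1 - θ) * φ θ ≤ (θ - l) * φ (l / θ))
  {σ : ℝ} (hσ0 : 0 < σ) (hσ1 : σ < 1)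
include hφ hσ0 hσ1

theorem one_sub_pow_mul_apply_pow_le (k : ℕ) :
    (1 - σ ^ (k + 1)) * φ (σ ^ (k + 1)) ≤ (1 - σ ^ (k + 1)) * φ σ := by
  induction k with
  | zero => simp
  | succ k ih =>
    have hlt : σ ^ (k + 2) < σ ^ (k + 1) := pow_lt_pow_right_of_lt_one₀ hσ0 hσ1 (by omega)
    have hstep := hφ _ _ (pow_pos hσ0 _) hlt (pow_lt_one₀ hσ0.le hσ1 (by omega))
    rw [pow_succ σ (k + 1), mul_div_cancel_left₀ _ (pow_pos hσ0 _).ne'] at hstep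
    rw [pow_succ σ (k + 1)]
    linarith

theorem apply_pow_le_apply {k : ℕ} (hk : 0 < k) : φ (σ ^ k) ≤ φ σ := by
  obtain ⟨k, rfl⟩ := Nat.exists_eq_succ_of_ne_zero hk.ne'
  exact le_of_mul_le_mul_left (one_sub_pow_mul_apply_pow_le hφ hσ0 hσ1 k)
    (sub_pos.2 (pow_lt_one₀ hσ0.le hσ1 (Nat.succ_ne_zero k)))

end

theorem stmt_1_general (φ : ℝ → ℝ)
    (hconstr : ∀ l θ : ℝ, 0 < l → l < θ → θ < 1 →
      0 ≤ (1 - l) * φ l - (1 - θ) * φ θ ∧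
      (1 - l) * φ l - (1 - θ) * φ θ ≤ (θ - l) * φ (l / θ))
    (θ : ℝ) (hθ0 : 0 < θ) (hθ1 : θ < 1) (n : ℕ) (hn : 0 < n) :
    φ θ ≤ φ (θ ^ ((1 : ℝ) / n)) := by
  have hroot : (θ ^ ((1 : ℝ) / n)) ^ n = θ := by
    rw [one_div, Real.rpow_inv_natCast_pow hθ0.le hn.ne']
  calc φ θ = φ ((θ ^ ((1 : ℝ) / n)) ^ n) := by rw [hroot]
    _ ≤ φ (θ ^ ((1 : ℝ) / n)) :=
      apply_pow_le_apply (fun l t h0 h1 h2 => (hconstr l t h0 h1 h2).2)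
        (Real.rpow_pos_of_pos hθ0 _) (Real.rpow_lt_one hθ0.le hθ1 (by positivity)) hn

/-- φ(θ) ≤ φ(θ^{1/n}) for all θ ∈ (0,1) and n ≥ 1. -/
theorem stmt_1 (d : ℕ) (hd : 1 ≤ d) (φ : ℝ → ℝ)
    (hrange : ∀ θ : ℝ, 0 < θ → θ < 1 → 0 ≤ φ θ ∧ φ θ ≤ d)
    (hconstr : ∀ l θ : ℝ, 0 < l → l < θ → θ < 1 →
      0 ≤ (1 - l) * φ l - (1 - θ) * φ θ ∧
      (1 - l) * φ l - (1 - θ) * φ θ ≤ (θ - l) * φ (l / θ))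
    (θ : ℝ) (hθ0 : 0 < θ) (hθ1 : θ < 1) (n : ℕ) (hn : 0 < n) :
    φ θ ≤ φ (θ ^ ((1 : ℝ) / n)) :=
  stmt_1_general φ hconstr θ hθ0 hθ1 n hn
end

section
/- Let d ≥ 1 and let φ : (0,1) → [0,d] satisfy the constraint 0 ≤ (1-λ)φ(λ) - (1-θ)φ(θ) ≤ (θ-λ)φ(λ/θ) for all 0 < λ < θ < 1. Then for any 0 < θ₁ < θ₂ < 1, |φ(θ₁) - φ(θ₂)| ≤ (d / (θ₂(1-θ₁))) · |θ₂ - θ₁|. In particular φ is continuous on (0,1). -/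
/-- local Lipschitz estimate and continuity on (0,1). -/
theorem stmt_2 (d : ℕ) (hd : 1 ≤ d) (φ : ℝ → ℝ)
    (hrange : ∀ θ : ℝ, 0 < θ → θ < 1 → 0 ≤ φ θ ∧ φ θ ≤ d)
    (hconstr : ∀ l θ : ℝ, 0 < l → l < θ → θ < 1 →
      0 ≤ (1 - l) * φ l - (1 - θ) * φ θ ∧
      (1 - l) * φ l - (1 - θ) * φ θ ≤ (θ - l) * φ (l / θ)) :
    (∀ θ₁ θ₂ : ℝ, 0 < θ₁ → θ₁ < θ₂ → θ₂ < 1 →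
      |φ θ₁ - φ θ₂| ≤ (d / (θ₂ * (1 - θ₁))) * |θ₂ - θ₁|) ∧
    ContinuousOn φ (Set.Ioo 0 1) := by
  have key : ∀ θ₁ θ₂ : ℝ, 0 < θ₁ → θ₁ < θ₂ → θ₂ < 1 →
      |φ θ₁ - φ θ₂| ≤ (d / (θ₂ * (1 - θ₁))) * |θ₂ - θ₁| := by
    intro a b ha hab hb1
    have hb0 : 0 < b := ha.trans hab
    have hq0 : 0 < a / b := div_pos ha hb0
    have hq1 : a / b < 1 := (div_lt_one hb0).mpr hab
    obtain ⟨hD0, hD1⟩ := hconstr a b ha hab hb1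
    obtain ⟨hq0', hqd⟩ := hrange (a / b) hq0 hq1
    obtain ⟨hb0', hbd⟩ := hrange b hb0 hb1
    have h1a : 0 < 1 - a := by linarith
    have hpos : (0:ℝ) < b * (1 - a) := by positivity
    have hc : (0:ℝ) ≤ b * (b - a) := by nlinarith
    have hd0 : (0:ℝ) ≤ (d:ℝ) := by positivity
    rw [abs_of_pos (show (0:ℝ) < b - a by linarith), div_mul_eq_mul_div,
      le_div_iff₀ hpos, ← abs_of_pos hpos, ← abs_mul, abs_le]
    constructor
    · nlinarith [mul_le_mul_of_nonneg_left hbd hc, mul_nonneg hb0.le hD0,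
        mul_nonneg (mul_nonneg (by linarith : (0:ℝ) ≤ b - a) hd0)
          (by linarith : (0:ℝ) ≤ 1 - b)]
    · nlinarith [mul_le_mul_of_nonneg_left hD1 hb0.le,
        mul_le_mul_of_nonneg_left hqd hc, mul_nonneg hc hb0',
        mul_nonneg (mul_nonneg (by linarith : (0:ℝ) ≤ b - a) hd0)
          (by linarith : (0:ℝ) ≤ 1 - b)]
  refine ⟨key, ?_⟩
  intro x hx
  obtain ⟨hx0, hx1⟩ := hx
  rw [Metric.continuousWithinAt_iff]
  intro ε hε
  have hd0 : (0:ℝ) < d := by exact_mod_cast hd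
  obtain ⟨C, hC, hCpos⟩ : ∃ C : ℝ, C = 4 * d / (x * (1 - x)) ∧ 0 < C :=
    ⟨_, rfl, div_pos (by linarith) (mul_pos hx0 (by linarith))⟩
  refine ⟨min (ε / (2 * C)) (min (x / 2) ((1 - x) / 2)),
    lt_min (div_pos hε (by linarith)) (lt_min (by linarith) (by linarith)), ?_⟩
  intro y hy hdy
  obtain ⟨hy0, hy1⟩ := hy
  have hdy' : |y - x| < min (ε / (2 * C)) (min (x / 2) ((1 - x) / 2)) := by
    simpa [Real.dist_eq] using hdy
  have h1 : |y - x| < ε / (2 * C) := lt_of_lt_of_le hdy' (min_le_left _ _)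
  have h2 : |y - x| < x / 2 :=
    lt_of_lt_of_le hdy' ((min_le_right _ _).trans (min_le_left _ _))
  have h3 : |y - x| < (1 - x) / 2 :=
    lt_of_lt_of_le hdy' ((min_le_right _ _).trans (min_le_right _ _))
  have hyx1 : x / 2 < y := by
    have := abs_lt.mp h2
    linarith [this.1]
  have hyx2 : y < x + (1 - x) / 2 := by
    have := abs_lt.mp h3
    linarith [this.2]
  have hbound : |φ y - φ x| ≤ C * |y - x| := by
    rcases lt_trichotomy y x with h | h | h
    · have hk := key y x hy0 h hx1
      have hcoef : (d : ℝ) / (x * (1 - y)) ≤ C := by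
        rw [hC, div_le_div_iff₀ (mul_pos hx0 (by linarith)) (mul_pos hx0 (by linarith))]
        nlinarith [mul_nonneg (mul_nonneg hd0.le hx0.le)
          (by linarith : (0:ℝ) ≤ 3 - 4 * y + x)]
      calc |φ y - φ x| ≤ (d / (x * (1 - y))) * |x - y| := hk
        _ ≤ C * |x - y| := mul_le_mul_of_nonneg_right hcoef (abs_nonneg _)
        _ = C * |y - x| := by rw [abs_sub_comm]
    · simp [h, abs_nonneg, mul_nonneg hCpos.le (abs_nonneg _)]
    · have hk := key x y hx0 h hy1
      have hcoef : (d : ℝ) / (y * (1 - x)) ≤ C := by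
        rw [hC, div_le_div_iff₀ (mul_pos hy0 (by linarith)) (mul_pos hx0 (by linarith))]
        nlinarith [mul_nonneg (mul_nonneg hd0.le (by linarith : (0:ℝ) ≤ 1 - x))
          (by linarith : (0:ℝ) ≤ 4 * y - x)]
      calc |φ y - φ x| = |φ x - φ y| := abs_sub_comm _ _
        _ ≤ (d / (y * (1 - x))) * |y - x| := hk
        _ ≤ C * |y - x| := mul_le_mul_of_nonneg_right hcoef (abs_nonneg _)
  rw [Real.dist_eq]
  calc |φ y - φ x| ≤ C * |y - x| := hbound
    _ < C * (ε / (2 * C)) := by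
        rcases eq_or_lt_of_le (abs_nonneg (y - x)) with h0 | h0
        · rw [← h0, mul_zero]; positivity
        · exact mul_lt_mul_of_pos_left h1 hCpos
    _ = ε / 2 := by field_simp
    _ < ε := by linarith
end

section
/- Let d ≥ 1 and let φ : (0,1) → [0,d] satisfy the constraint 0 ≤ (1-λ)φ(λ) - (1-θ)φ(θ) ≤ (θ-λ)φ(λ/θ) for all 0 < λ < θ < 1. Then the limit of φ(θ) as θ → 1⁻ exists. -/
set_option maxHeartbeats 1600000 in
/-- the limit of φ(θ) as θ → 1⁻ exists. -/
theorem stmt_4 (d : ℕ) (hd : 1 ≤ d) (φ : ℝ → ℝ)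
    (hrange : ∀ θ : ℝ, 0 < θ → θ < 1 → 0 ≤ φ θ ∧ φ θ ≤ d)
    (hconstr : ∀ l θ : ℝ, 0 < l → l < θ → θ < 1 →
      0 ≤ (1 - l) * φ l - (1 - θ) * φ θ ∧
      (1 - l) * φ l - (1 - θ) * φ θ ≤ (θ - l) * φ (l / θ)) :
    ∃ L : ℝ, Filter.Tendsto φ (nhdsWithin 1 (Set.Ioo 0 1)) (nhds L) := by
  have hD : (1:ℝ) ≤ (d:ℝ) := by exact_mod_cast hd
  -- φ (a*b) ≤ max (φ a) (φ b)
  have hmax : ∀ a b : ℝ, 0 < a → a < 1 → 0 < b → b < 1 →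
      φ (a * b) ≤ max (φ a) (φ b) := by
    intro a b ha ha1 hb hb1
    have hab : 0 < a * b := mul_pos ha hb
    have hab1 : a * b < a := by nlinarith
    have h := (hconstr (a*b) a hab hab1 ha1).2
    rw [mul_div_cancel_left₀ _ (ne_of_gt ha)] at h
    have h1 : φ a ≤ max (φ a) (φ b) := le_max_left _ _
    have h2 : φ b ≤ max (φ a) (φ b) := le_max_right _ _
    have hab1' : a * b < 1 := lt_trans hab1 ha1
    nlinarith
  -- φ (x^(n+1)) ≤ φ x
  have hpow : ∀ x : ℝ, 0 < x → x < 1 → ∀ n : ℕ, φ (x^(n+1)) ≤ φ x := by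
    intro x hx hx1 n
    induction n with
    | zero => simp
    | succ n ih =>
      have hxp : 0 < x^(n+1) := pow_pos hx _
      have hxp1 : x^(n+1) < 1 := pow_lt_one₀ (le_of_lt hx) hx1 (by omega)
      have h := hmax (x^(n+1)) x hxp hxp1 hx hx1
      rw [← pow_succ] at h
      exact le_trans h (max_le ih le_rfl)
  -- sup
  set S := φ '' Set.Ioo (0:ℝ) 1 with hS
  have hne : S.Nonempty := ⟨φ (1/2), ⟨1/2, ⟨by norm_num, by norm_num⟩, rfl⟩⟩
  have hbdd : BddAbove S := by
    refine ⟨d, ?_⟩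
    rintro _ ⟨t, ht, rfl⟩
    exact (hrange t ht.1 ht.2).2
  set L := sSup S with hLdef
  have hle : ∀ t : ℝ, 0 < t → t < 1 → φ t ≤ L := by
    intro t ht ht1
    exact le_csSup hbdd ⟨t, ⟨ht, ht1⟩, rfl⟩
  have hLd : L ≤ d := csSup_le hne (by rintro _ ⟨t, ht, rfl⟩; exact (hrange t ht.1 ht.2).2)
  have hL0 : 0 ≤ L :=
    le_trans (hrange (1/2) (by norm_num) (by norm_num)).1 (hle (1/2) (by norm_num) (by norm_num))
  clear_value L
  -- key: eventually φ t > L - ε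
  have key : ∀ ε : ℝ, 0 < ε → ∃ a : ℝ, a < 1 ∧
      ∀ t : ℝ, 0 < t → t < 1 → a < t → L - ε < φ t := by
    intro ε hε
    by_cases hc : L < ε
    · exact ⟨0, by norm_num, fun t ht ht1 _ => by
        have := (hrange t ht ht1).1; linarith⟩
    push_neg at hc
    obtain ⟨y, hyS, hy⟩ := exists_lt_of_lt_csSup hne (show L - ε/2 < sSup S by rw [← hLdef]; linarith)
    obtain ⟨u, hu, rfl⟩ := hyS
    obtain ⟨hu0, hu1⟩ := hu
    refine ⟨max u (1 - (1-u)*ε/(2*d)), ?_, ?_⟩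
    · apply max_lt hu1
      have hd0 : (0:ℝ) < 2*d := by linarith
      have : 0 < (1-u)*ε/(2*d) := div_pos (mul_pos (by linarith) hε) hd0
      linarith
    intro t ht0 ht1 hta
    have htu : u < t := lt_of_le_of_lt (le_max_left _ _) hta
    have htb : 1 - (1-u)*ε/(2*d) < t := lt_of_le_of_lt (le_max_right _ _) hta
    -- find n with u ≤ t^n and t^(n+1) < u
    have hex : ∃ k : ℕ, t^k < u := exists_pow_lt_of_lt_one hu0 ht1
    classical
    have hspec := Nat.find_spec hex
    have hk1 : 1 ≤ Nat.find hex := by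
      rcases Nat.eq_zero_or_pos (Nat.find hex) with h | h
      · rw [h] at hspec; simp at hspec; linarith
      · exact h
    obtain ⟨n, hkn⟩ : ∃ n, Nat.find hex = n + 1 := ⟨Nat.find hex - 1, by omega⟩
    rw [hkn] at hspec
    have htn1 : t^(n+1) < u := hspec
    have htn : u ≤ t^n := by
      have := Nat.find_min hex (m := n) (by omega)
      push_neg at this
      exact this
    clear hspec hk1 hkn hex
    have hl0 : 0 < t^(n+1) := pow_pos ht0 _
    have hmono := (hconstr (t^(n+1)) u hl0 htn1 hu1).1
    have hlge : u * t ≤ t^(n+1) := by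
      rw [pow_succ]
      exact mul_le_mul_of_nonneg_right htn (le_of_lt ht0)
    have hφl0 : 0 ≤ φ (t^(n+1)) := (hrange _ hl0 (lt_trans htn1 hu1)).1
    have hφlt : φ (t^(n+1)) ≤ φ t := hpow t ht0 ht1 n
    have hut1 : u * t < 1 := by nlinarith
    -- (1-u) φ u ≤ (1 - u t) φ t
    have h5 : (1-u) * φ u ≤ (1 - u*t) * φ t := by
      nlinarith [mul_nonneg (sub_nonneg.mpr hlge) hφl0,
        mul_nonneg (le_of_lt (sub_pos.mpr hut1)) (sub_nonneg.mpr hφlt)]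
    -- conclude
    by_contra hcon
    push_neg at hcon
    have hd1t : (d:ℝ) * (1 - t) < (1-u)*ε/2 := by
      have h1t : 1 - t < (1-u)*ε/(2*d) := by linarith
      have : (d:ℝ) * (1-t) < (d:ℝ) * ((1-u)*ε/(2*d)) := by
        apply mul_lt_mul_of_pos_left h1t; linarith
      calc (d:ℝ) * (1-t) < (d:ℝ) * ((1-u)*ε/(2*d)) := this
        _ = (1-u)*ε/2 := by field_simp
    have hLε : 0 ≤ L - ε := by linarith
    have e1 : (1-u*t)*φ t ≤ (1-u*t)*(L-ε) := mul_le_mul_of_nonneg_left hcon (by linarith)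
    have e2 : (1-u)*(L-ε/2) < (1-u)*φ u := mul_lt_mul_of_pos_left hy (by linarith)
    have e3 : u*(1-t)*(L-ε) ≤ (1-t)*d := by
      have h1 : u*(L-ε) ≤ (d:ℝ) := by nlinarith [mul_nonneg (sub_nonneg.mpr (le_of_lt hu1)) hLε]
      calc u*(1-t)*(L-ε) = (1-t)*(u*(L-ε)) := by ring
        _ ≤ (1-t)*d := mul_le_mul_of_nonneg_left h1 (by linarith)
    have e4 : (1-u)*(L-ε/2) < (1-u*t)*(L-ε) := by linarith
    have e5 : (1-u)*(ε/2) < u*(1-t)*(L-ε) := by nlinarith [e4]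
    nlinarith [e5, e3, hd1t]
  refine ⟨L, ?_⟩
  rw [Metric.tendsto_nhdsWithin_nhds]
  intro ε hε
  obtain ⟨a, ha1, ha⟩ := key ε hε
  refine ⟨1 - a, by linarith, ?_⟩
  intro x hx hdx
  obtain ⟨hx0, hx1⟩ := hx
  rw [Real.dist_eq] at hdx
  have hax : a < x := by
    rw [abs_of_nonpos (by linarith)] at hdx
    linarith
  have h1 := ha x hx0 hx1 hax
  have h2 := hle x hx0 hx1
  rw [Real.dist_eq, abs_of_nonpos (by linarith)]
  linarith
end

section
/- Let d ≥ 1 and let φ : (0,1) → [0,d] satisfy the constraint 0 ≤ (1-λ)φ(λ) - (1-θ)φ(θ) ≤ (θ-λ)φ(λ/θ) for all 0 < λ < θ < 1. Then the infimum of φ over (0,1) equals the limit of φ(θ) as θ → 0⁺, and the supremum of φ over (0,1) equals the limit of φ(θ) as θ → 1⁻. -/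
set_option maxHeartbeats 1000000 in
/-- the infimum of φ over (0,1) is the limit at 0⁺ and the
supremum is the limit at 1⁻. -/
theorem stmt_5 (d : ℕ) (hd : 1 ≤ d) (φ : ℝ → ℝ)
    (hrange : ∀ θ : ℝ, 0 < θ → θ < 1 → 0 ≤ φ θ ∧ φ θ ≤ d)
    (hconstr : ∀ l θ : ℝ, 0 < l → l < θ → θ < 1 →
      0 ≤ (1 - l) * φ l - (1 - θ) * φ θ ∧
      (1 - l) * φ l - (1 - θ) * φ θ ≤ (θ - l) * φ (l / θ)) :
    Filter.Tendsto φ (nhdsWithin 0 (Set.Ioo 0 1)) (nhds (sInf (φ '' Set.Ioo 0 1))) ∧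
    Filter.Tendsto φ (nhdsWithin 1 (Set.Ioo 0 1)) (nhds (sSup (φ '' Set.Ioo 0 1))) := by
  classical
  have hd1 : (1:ℝ) ≤ (d:ℝ) := by exact_mod_cast hd
  -- φ(θ^m) ≤ φ(θ) for m ≥ 1
  have hpow : ∀ θ : ℝ, 0 < θ → θ < 1 → ∀ m : ℕ, 1 ≤ m → φ (θ ^ m) ≤ φ θ := by
    intro θ h0 h1 m hm
    have key : ∀ k : ℕ, (1 - θ ^ (k+1)) * φ (θ ^ (k+1)) ≤ (1 - θ ^ (k+1)) * φ θ := by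
      intro k
      induction k with
      | zero => simp [pow_one]
      | succ n ih =>
        have hp1 : 0 < θ ^ (n+1) := pow_pos h0 _
        have hp2 : 0 < θ ^ (n+2) := pow_pos h0 _
        have hlt : θ ^ (n+2) < θ ^ (n+1) := by
          calc θ ^ (n+2) = θ ^ (n+1) * θ := by ring
          _ < θ ^ (n+1) * 1 := by nlinarith
          _ = θ ^ (n+1) := by ring
        have hlt1 : θ ^ (n+1) < 1 := pow_lt_one₀ h0.le h1 (Nat.succ_ne_zero n)
        have hC := (hconstr (θ ^ (n+2)) (θ ^ (n+1)) hp2 hlt hlt1).2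
        have hdiv : θ ^ (n+2) / θ ^ (n+1) = θ := by
          rw [pow_succ θ (n+1)]
          field_simp
        rw [hdiv] at hC
        have hid : (1 - θ ^ (n+1)) * φ θ + (θ ^ (n+1) - θ ^ (n+2)) * φ θ
            = (1 - θ ^ (n+2)) * φ θ := by ring
        linarith
    obtain ⟨k, rfl⟩ : ∃ k, m = k + 1 := ⟨m - 1, (Nat.succ_pred_eq_of_pos hm).symm⟩
    have hp1 : θ ^ (k+1) < 1 := pow_lt_one₀ h0.le h1 (Nat.succ_ne_zero k)
    have := key k
    have hpos : 0 < 1 - θ ^ (k+1) := by linarith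
    exact le_of_mul_le_mul_left this hpos
  set A := sInf (φ '' Set.Ioo 0 1) with hA
  set S := sSup (φ '' Set.Ioo 0 1) with hS
  have hhalf : (1/2 : ℝ) ∈ Set.Ioo (0:ℝ) 1 := by norm_num
  have hne : (φ '' Set.Ioo 0 1).Nonempty := ⟨φ (1/2), ⟨1/2, hhalf, rfl⟩⟩
  have hbb : BddBelow (φ '' Set.Ioo 0 1) := by
    refine ⟨0, ?_⟩
    rintro y ⟨x, hx, rfl⟩
    exact (hrange x hx.1 hx.2).1
  have hba : BddAbove (φ '' Set.Ioo 0 1) := by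
    refine ⟨(d:ℝ), ?_⟩
    rintro y ⟨x, hx, rfl⟩
    exact (hrange x hx.1 hx.2).2
  have hAle : ∀ x ∈ Set.Ioo (0:ℝ) 1, A ≤ φ x := fun x hx => csInf_le hbb ⟨x, hx, rfl⟩
  have hSge : ∀ x ∈ Set.Ioo (0:ℝ) 1, φ x ≤ S := fun x hx => le_csSup hba ⟨x, hx, rfl⟩
  have hA0 : 0 ≤ A := by
    apply le_csInf hne
    rintro y ⟨x, hx, rfl⟩
    exact (hrange x hx.1 hx.2).1
  have hAd : A ≤ d := le_trans (hAle _ hhalf) (hrange _ hhalf.1 hhalf.2).2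
  constructor
  · -- limit at 0
    rw [Metric.tendsto_nhdsWithin_nhds]
    intro ε hε
    obtain ⟨y, hy, hylt⟩ := exists_lt_of_csInf_lt hne (show sInf (φ '' Set.Ioo 0 1) < A + ε/4 by rw [← hA]; linarith)
    obtain ⟨s0, hs0, rfl⟩ := hy
    obtain ⟨n, hn⟩ := exists_pow_lt_of_lt_one (show (0:ℝ) < ε/(4*((d:ℝ)+1)) by positivity) hs0.2
    set s := s0 ^ (n+1) with hs_def
    have hs_pos : 0 < s := pow_pos hs0.1 _
    have hs_lt1 : s < 1 := pow_lt_one₀ hs0.1.le hs0.2 (Nat.succ_ne_zero n)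
    have hs_small : s < ε/(4*((d:ℝ)+1)) := by
      have h1 : s = s0 ^ n * s0 := by rw [hs_def]; ring
      have h2 : (0:ℝ) < s0 ^ n := pow_pos hs0.1 _
      nlinarith [hs0.1, hs0.2]
    have hs_d : s * d < ε/4 := by
      have : s * ((d:ℝ)+1) < ε/4 := by
        have := mul_lt_mul_of_pos_right hs_small (show (0:ℝ) < (d:ℝ)+1 by positivity)
        calc s * ((d:ℝ)+1) < ε/(4*((d:ℝ)+1)) * ((d:ℝ)+1) := this
        _ = ε/4 := by field_simp
      nlinarith [hs_pos]
    have hφs : φ s ≤ φ s0 := hpow s0 hs0.1 hs0.2 (n+1) (Nat.succ_le_succ (Nat.zero_le n))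
    refine ⟨min s (ε/(2*((d:ℝ)+ε))), by positivity, ?_⟩
    intro x hx hdx
    rw [Real.dist_eq, sub_zero, abs_of_pos hx.1] at hdx
    have hxs : x < s := lt_of_lt_of_le hdx (min_le_left _ _)
    have hxe : x < ε/(2*((d:ℝ)+ε)) := lt_of_lt_of_le hdx (min_le_right _ _)
    have hC := (hconstr x s hx.1 hxs hs_lt1).2
    have hds : 0 < x / s := div_pos hx.1 hs_pos
    have hds1 : x / s < 1 := (div_lt_one hs_pos).mpr hxs
    have hφr := hrange (x/s) hds hds1
    have hφx := hrange x hx.1 hx.2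
    have hφs' := hrange s hs_pos hs_lt1
    -- (1-x) φ x ≤ (1-s) φ s + (s-x) d ≤ φ s + s d < A + ε/2
    have key1 : (1-x) * φ x < A + ε/2 := by
      have h1 : (s - x) * φ (x/s) ≤ s * (d:ℝ) := by
        have : (s - x) * φ (x/s) ≤ s * φ (x/s) := by nlinarith [hφr.1, hx.1]
        nlinarith [hφr.2, hs_pos]
      have h2 : (1-s) * φ s ≤ φ s := by nlinarith [hφs'.1, hs_pos]
      linarith
    have hxd : x * (d:ℝ) < ε/2 := by
      have h1 : x * ((d:ℝ)+ε) < ε/2 := by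
        have := mul_lt_mul_of_pos_right hxe (show (0:ℝ) < (d:ℝ)+ε by positivity)
        calc x * ((d:ℝ)+ε) < ε/(2*((d:ℝ)+ε)) * ((d:ℝ)+ε) := this
        _ = ε/2 := by field_simp
      nlinarith [hx.1]
    have hupper : φ x < A + ε := by nlinarith [hφx.2, hx.1]
    have hlower : A ≤ φ x := hAle x hx
    rw [Real.dist_eq, abs_sub_lt_iff]
    constructor <;> linarith
  · -- limit at 1
    rw [Metric.tendsto_nhdsWithin_nhds]
    intro ε hε
    obtain ⟨y, hy, hylt⟩ := exists_lt_of_lt_csSup hne (show S - ε/2 < sSup (φ '' Set.Ioo 0 1) by rw [← hS]; linarith)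
    obtain ⟨b, hb, rfl⟩ := hy
    have hb0 : 0 < b := hb.1
    have hb1 : b < 1 := hb.2
    refine ⟨min (1-b) (ε*(1-b)/(2*((d:ℝ)+1))), lt_min (by linarith) (div_pos (by nlinarith) (by positivity)), ?_⟩
    intro x hx hdx
    rw [Real.dist_eq, abs_of_neg (by linarith [hx.2] : x - 1 < 0)] at hdx
    have hdx1 : 1 - x < 1 - b := lt_of_le_of_lt (le_of_eq (by ring)) (lt_of_lt_of_le hdx (min_le_left _ _))
    have hdx2 : 1 - x < ε*(1-b)/(2*((d:ℝ)+1)) := lt_of_le_of_lt (le_of_eq (by ring)) (lt_of_lt_of_le hdx (min_le_right _ _))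
    have hbx : b < x := by linarith
    -- find minimal m with x^m ≤ b
    have hex : ∃ k, x ^ k ≤ b := by
      obtain ⟨k, hk⟩ := exists_pow_lt_of_lt_one hb0 hx.2
      exact ⟨k, hk.le⟩
    set m := Nat.find hex with hm_def
    have hspec : x ^ m ≤ b := Nat.find_spec hex
    have hm1 : 1 ≤ m := by
      by_contra h
      push_neg at h
      interval_cases m
      · simp at hspec; linarith
    have hmin : ¬ x ^ (m-1) ≤ b := Nat.find_min hex (Nat.sub_lt hm1 one_pos)
    push_neg at hmin
    have hxm_gt : b * x < x ^ m := by
      have : x ^ m = x ^ (m-1) * x := by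
        conv_lhs => rw [← Nat.sub_add_cancel hm1]
        rw [pow_succ]
      rw [this]
      exact mul_lt_mul_of_pos_right hmin hx.1
    have hxm_pos : 0 < x ^ m := pow_pos hx.1 _
    have hxm_lt1 : x ^ m < 1 := lt_of_le_of_lt hspec hb1
    have hφm : φ (x ^ m) ≤ φ x := hpow x hx.1 hx.2 m hm1
    -- ψ antitone: (1-b) φ b ≤ (1-x^m) φ (x^m)
    have hpsi : (1-b) * φ b ≤ (1 - x^m) * φ (x^m) := by
      rcases lt_or_eq_of_le hspec with h | h
      · have := (hconstr (x^m) b hxm_pos h hb1).1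
        linarith
      · rw [h]
    have hφmr := hrange (x^m) hxm_pos hxm_lt1
    have hφbr := hrange b hb0 hb1
    -- b - x^m ≤ 1 - x
    have hbt : b - x^m ≤ 1 - x := by nlinarith [hb1, hx.2]
    have h1a : (b - x^m) * φ (x^m) ≤ (1-x) * (d:ℝ) := by
      apply mul_le_mul hbt hφmr.2 hφmr.1 (by linarith [hx.2])
    have h1 : (1-b) * φ (x^m) ≥ (1-b) * φ b - (1-x) * (d:ℝ) := by
      have hid : (1-b) * φ (x^m) = (1 - x^m) * φ (x^m) - (b - x^m) * φ (x^m) := by ring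
      linarith
    have h2 : (1-x) * (d:ℝ) < ε * (1-b) / 2 := by
      have hlt := mul_lt_mul_of_pos_right hdx2 (show (0:ℝ) < 2*((d:ℝ)+1) by positivity)
      rw [div_mul_cancel₀] at hlt
      · nlinarith [hx.2, hε, hb1]
      · positivity
    have h3 : 0 < (1-b) * (φ (x^m) - φ b + ε/2) := by nlinarith
    have h4 : φ (x^m) - φ b + ε/2 > 0 := by
      by_contra h
      push_neg at h
      nlinarith [hb1]
    have hlow : S - ε < φ x := by linarith
    have hhigh : φ x ≤ S := hSge x hx
    rw [Real.dist_eq, abs_sub_lt_iff]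
    constructor <;> linarith
end

section
/- Let d ≥ 1 and let φ : (0,1) → [0,d] satisfy the constraint 0 ≤ (1-λ)φ(λ) - (1-θ)φ(θ) ≤ (θ-λ)φ(λ/θ) for all 0 < λ < θ < 1, and suppose the limit L = lim_{θ→1⁻} φ(θ) exists and equals sup_{θ∈(0,1)} φ(θ). If φ(θ₀) = L for some θ₀ ∈ (0,1), then φ(θ) = L for all θ ∈ (θ₀, 1). -/
/-- if φ attains its value L = lim_{θ→1⁻} φ = sup φ at some
θ₀ ∈ (0,1), then φ ≡ L on (θ₀, 1). -/
theorem stmt_6 (d : ℕ) (hd : 1 ≤ d) (φ : ℝ → ℝ) (L : ℝ)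
    (hrange : ∀ θ : ℝ, 0 < θ → θ < 1 → 0 ≤ φ θ ∧ φ θ ≤ d)
    (hconstr : ∀ l θ : ℝ, 0 < l → l < θ → θ < 1 →
      0 ≤ (1 - l) * φ l - (1 - θ) * φ θ ∧
      (1 - l) * φ l - (1 - θ) * φ θ ≤ (θ - l) * φ (l / θ))
    (hlim : Filter.Tendsto φ (nhdsWithin 1 (Set.Ioo 0 1)) (nhds L))
    (hsup : IsLUB (φ '' Set.Ioo 0 1) L)
    (θ₀ : ℝ) (hθ₀ : θ₀ ∈ Set.Ioo (0 : ℝ) 1) (hval : φ θ₀ = L) :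
    ∀ θ : ℝ, θ₀ < θ → θ < 1 → φ θ = L := by
  obtain ⟨h0, h1⟩ := hθ₀
  intro θ hθ₀θ hθ1
  have hθpos : 0 < θ := h0.trans hθ₀θ
  have hub : ∀ x ∈ Set.Ioo (0:ℝ) 1, φ x ≤ L := fun x hx =>
    hsup.1 ⟨x, hx, rfl⟩
  have hle : φ θ ≤ L := hub θ ⟨hθpos, hθ1⟩
  have hratio : θ₀ / θ ∈ Set.Ioo (0:ℝ) 1 := by
    constructor
    · positivity
    · rw [div_lt_one hθpos]; exact hθ₀θ
  have hφr : φ (θ₀ / θ) ≤ L := hub _ hratio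
  have hc := (hconstr θ₀ θ h0 hθ₀θ hθ1).2
  rw [hval] at hc
  have : (1 - θ₀) * L - (1 - θ) * φ θ ≤ (θ - θ₀) * L :=
    hc.trans (by nlinarith)
  have hge : L ≤ φ θ := by nlinarith
  linarith
end

section
/- Let d ≥ 1 and let φ : (0,1) → [0,d] satisfy the constraint 0 ≤ (1-λ)φ(λ) - (1-θ)φ(θ) ≤ (θ-λ)φ(λ/θ) for all 0 < λ < θ < 1. If lim_{θ→0⁺} φ(θ) = 0, then φ(θ) = 0 for all θ ∈ (0,1). -/
/-- if φ(θ) → 0 as θ → 0⁺ then φ ≡ 0 on (0,1). -/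
theorem stmt_7 (d : ℕ) (hd : 1 ≤ d) (φ : ℝ → ℝ)
    (hrange : ∀ θ : ℝ, 0 < θ → θ < 1 → 0 ≤ φ θ ∧ φ θ ≤ d)
    (hconstr : ∀ l θ : ℝ, 0 < l → l < θ → θ < 1 →
      0 ≤ (1 - l) * φ l - (1 - θ) * φ θ ∧
      (1 - l) * φ l - (1 - θ) * φ θ ≤ (θ - l) * φ (l / θ))
    (hlim : Filter.Tendsto φ (nhdsWithin 0 (Set.Ioo 0 1)) (nhds 0)) :
    ∀ θ : ℝ, 0 < θ → θ < 1 → φ θ = 0 := by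
  intro θ hθ0 hθ1
  have hne : (nhdsWithin (0:ℝ) (Set.Ioo 0 1)).NeBot := by
    refine mem_closure_iff_nhdsWithin_neBot.mp ?_
    have : (0:ℝ) ∈ closure (Set.Ioo (0:ℝ) 1) := by
      rw [closure_Ioo (by norm_num : (0:ℝ) ≠ 1)]
      exact ⟨le_refl _, by norm_num⟩
    exact this
  have hg : Filter.Tendsto (fun l => (1 - l) * φ l)
      (nhdsWithin 0 (Set.Ioo 0 1)) (nhds 0) := by
    have h1 : Filter.Tendsto (fun l : ℝ => 1 - l)
        (nhdsWithin 0 (Set.Ioo 0 1)) (nhds 1) := by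
      have hc : ContinuousWithinAt (fun l : ℝ => 1 - l) (Set.Ioo 0 1) 0 :=
        (continuous_const.sub continuous_id).continuousWithinAt
      simpa using hc.tendsto
    simpa using h1.mul hlim
  have key : (1 - θ) * φ θ ≤ 0 := by
    refine ge_of_tendsto hg ?_
    filter_upwards [self_mem_nhdsWithin, eventually_nhdsWithin_of_eventually_nhds
      (eventually_lt_nhds hθ0)] with l hl hlθ
    linarith [(hconstr l θ hl.1 hlθ hθ1).1]
  have h0 := (hrange θ hθ0 hθ1).1
  nlinarith [sub_pos.mpr hθ1]
end

section
/- Let d ≥ 1 and let φ : (0,1) → [0,d] be an increasing (nondecreasing) function. Then φ satisfies the constraint 0 ≤ (1-λ)φ(λ) - (1-θ)φ(θ) ≤ (θ-λ)φ(λ/θ) for all 0 < λ < θ < 1 if and only if the function θ ↦ (1-θ)φ(θ) is nonincreasing on (0,1). -/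
/-- for nondecreasing φ : (0,1) → [0,d], the two-sided constraint
holds iff θ ↦ (1-θ)φ(θ) is nonincreasing on (0,1). -/
theorem stmt_9 (d : ℕ) (hd : 1 ≤ d) (φ : ℝ → ℝ)
    (hrange : ∀ θ : ℝ, 0 < θ → θ < 1 → 0 ≤ φ θ ∧ φ θ ≤ d)
    (hmono : MonotoneOn φ (Set.Ioo 0 1)) :
    (∀ l θ : ℝ, 0 < l → l < θ → θ < 1 →
      0 ≤ (1 - l) * φ l - (1 - θ) * φ θ ∧
      (1 - l) * φ l - (1 - θ) * φ θ ≤ (θ - l) * φ (l / θ)) ↔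
    AntitoneOn (fun θ : ℝ => (1 - θ) * φ θ) (Set.Ioo 0 1) := by
  constructor
  · intro h a ha b hb hab
    rcases eq_or_lt_of_le hab with rfl | hlt
    · exact le_refl _
    · have := (h a b ha.1 hlt hb.2).1
      simp only
      linarith
  · intro h l θ hl hlθ hθ
    have hlmem : l ∈ Set.Ioo (0:ℝ) 1 := ⟨hl, hlθ.trans hθ⟩
    have hθmem : θ ∈ Set.Ioo (0:ℝ) 1 := ⟨hl.trans hlθ, hθ⟩
    have hθ0 : (0:ℝ) < θ := hl.trans hlθ
    have hdiv : l / θ ∈ Set.Ioo (0:ℝ) 1 :=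
      ⟨div_pos hl hθ0, (div_lt_one hθ0).mpr hlθ⟩
    constructor
    · have := h hlmem hθmem hlθ.le
      simpa using this
    · have h1 : φ l ≤ φ θ := hmono hlmem hθmem hlθ.le
      have hle : l ≤ l / θ := by
        rw [le_div_iff₀ hθ0]
        nlinarith
      have h2 : φ l ≤ φ (l / θ) := hmono hlmem hdiv hle
      nlinarith
end

section
/- Let d ≥ 1 and suppose φ₁, φ₂ : (0,1) → [0,d] both satisfy the constraint 0 ≤ (1-λ)f(λ) - (1-θ)f(θ) ≤ (θ-λ)f(λ/θ) for all 0 < λ < θ < 1. Then the pointwise maximum max(φ₁, φ₂) also satisfies this constraint. -/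
/-- the class 𝒜_d is closed under pointwise maximum. -/
theorem stmt_10 (d : ℕ) (hd : 1 ≤ d) (φ₁ φ₂ : ℝ → ℝ)
    (hrange₁ : ∀ θ : ℝ, 0 < θ → θ < 1 → 0 ≤ φ₁ θ ∧ φ₁ θ ≤ d)
    (hrange₂ : ∀ θ : ℝ, 0 < θ → θ < 1 → 0 ≤ φ₂ θ ∧ φ₂ θ ≤ d)
    (hconstr₁ : ∀ l θ : ℝ, 0 < l → l < θ → θ < 1 →
      0 ≤ (1 - l) * φ₁ l - (1 - θ) * φ₁ θ ∧
      (1 - l) * φ₁ l - (1 - θ) * φ₁ θ ≤ (θ - l) * φ₁ (l / θ))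
    (hconstr₂ : ∀ l θ : ℝ, 0 < l → l < θ → θ < 1 →
      0 ≤ (1 - l) * φ₂ l - (1 - θ) * φ₂ θ ∧
      (1 - l) * φ₂ l - (1 - θ) * φ₂ θ ≤ (θ - l) * φ₂ (l / θ)) :
    ∀ l θ : ℝ, 0 < l → l < θ → θ < 1 →
      0 ≤ (1 - l) * max (φ₁ l) (φ₂ l) - (1 - θ) * max (φ₁ θ) (φ₂ θ) ∧
      (1 - l) * max (φ₁ l) (φ₂ l) - (1 - θ) * max (φ₁ θ) (φ₂ θ)
        ≤ (θ - l) * max (φ₁ (l / θ)) (φ₂ (l / θ)) := by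
  intro l θ hl hlt ht1
  have h1l : (0:ℝ) < 1 - l := by linarith
  have h1t : (0:ℝ) < 1 - θ := by linarith
  have htl : (0:ℝ) < θ - l := by linarith
  have hc1 := hconstr₁ l θ hl hlt ht1
  have hc2 := hconstr₂ l θ hl hlt ht1
  constructor
  · rcases le_total (φ₁ θ) (φ₂ θ) with h | h
    · have h2 : max (φ₁ θ) (φ₂ θ) = φ₂ θ := max_eq_right h
      have h3 : φ₂ l ≤ max (φ₁ l) (φ₂ l) := le_max_right _ _
      nlinarith [hc2.1]
    · have h2 : max (φ₁ θ) (φ₂ θ) = φ₁ θ := max_eq_left h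
      have h3 : φ₁ l ≤ max (φ₁ l) (φ₂ l) := le_max_left _ _
      nlinarith [hc1.1]
  · rcases le_total (φ₁ l) (φ₂ l) with h | h
    · have h2 : max (φ₁ l) (φ₂ l) = φ₂ l := max_eq_right h
      have h3 : φ₂ θ ≤ max (φ₁ θ) (φ₂ θ) := le_max_right _ _
      have h4 : φ₂ (l / θ) ≤ max (φ₁ (l / θ)) (φ₂ (l / θ)) := le_max_right _ _
      nlinarith [hc2.2]
    · have h2 : max (φ₁ l) (φ₂ l) = φ₁ l := max_eq_left h
      have h3 : φ₁ θ ≤ max (φ₁ θ) (φ₂ θ) := le_max_left _ _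
      have h4 : φ₁ (l / θ) ≤ max (φ₁ (l / θ)) (φ₂ (l / θ)) := le_max_left _ _
      nlinarith [hc1.2]
end

section
/- Let d ≥ 1 and let (φⱼ)_{j∈J} be a nonempty family of functions (0,1) → [0,d], each satisfying the constraint 0 ≤ (1-λ)φⱼ(λ) - (1-θ)φⱼ(θ) ≤ (θ-λ)φⱼ(λ/θ) for all 0 < λ < θ < 1. Then the pointwise supremum f(θ) = sup_{j∈J} φⱼ(θ) also satisfies this constraint. -/
/-- the class 𝒜_d is closed under pointwise suprema of
nonempty families. -/
theorem stmt_11 (d : ℕ) (hd : 1 ≤ d) (J : Type*) [Nonempty J] (φ : J → ℝ → ℝ)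
    (hrange : ∀ (j : J) (θ : ℝ), 0 < θ → θ < 1 → 0 ≤ φ j θ ∧ φ j θ ≤ d)
    (hconstr : ∀ (j : J) (l θ : ℝ), 0 < l → l < θ → θ < 1 →
      0 ≤ (1 - l) * φ j l - (1 - θ) * φ j θ ∧
      (1 - l) * φ j l - (1 - θ) * φ j θ ≤ (θ - l) * φ j (l / θ)) :
    ∀ l θ : ℝ, 0 < l → l < θ → θ < 1 →
      0 ≤ (1 - l) * (⨆ j, φ j l) - (1 - θ) * (⨆ j, φ j θ) ∧
      (1 - l) * (⨆ j, φ j l) - (1 - θ) * (⨆ j, φ j θ)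
        ≤ (θ - l) * (⨆ j, φ j (l / θ)) := by
  intro l θ hl hlθ hθ
  have hθ0 : 0 < θ := hl.trans hlθ
  have hl1 : l < 1 := hlθ.trans hθ
  have hlt0 : 0 < l / θ := div_pos hl hθ0
  have hlt1 : l / θ < 1 := (div_lt_one hθ0).mpr hlθ
  have bdd : ∀ x : ℝ, 0 < x → x < 1 → BddAbove (Set.range fun j => φ j x) := by
    intro x hx hx1
    exact ⟨d, by rintro _ ⟨j, rfl⟩; exact (hrange j x hx hx1).2⟩
  have h1l : (0:ℝ) < 1 - l := by linarith
  have h1θ : (0:ℝ) < 1 - θ := by linarith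
  have hθl : (0:ℝ) ≤ θ - l := by linarith
  have Sl_le : ∀ j, φ j l ≤ ⨆ i, φ i l := fun j => le_ciSup (bdd l hl hl1) j
  have Sθ_le : ∀ j, φ j θ ≤ ⨆ i, φ i θ := fun j => le_ciSup (bdd θ hθ0 hθ) j
  have Slt_le : ∀ j, φ j (l / θ) ≤ ⨆ i, φ i (l / θ) :=
    fun j => le_ciSup (bdd _ hlt0 hlt1) j
  constructor
  · have : (1 - θ) * (⨆ j, φ j θ) ≤ (1 - l) * (⨆ j, φ j l) := by
      rw [mul_comm (1 - θ)]
      rw [← le_div_iff₀ h1θ]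
      apply ciSup_le
      intro j
      rw [le_div_iff₀ h1θ, mul_comm]
      have h := (hconstr j l θ hl hlθ hθ).1
      have := Sl_le j
      nlinarith
    linarith
  · have : (1 - l) * (⨆ j, φ j l) ≤
        (1 - θ) * (⨆ j, φ j θ) + (θ - l) * (⨆ j, φ j (l / θ)) := by
      rw [mul_comm (1 - l), ← le_div_iff₀ h1l]
      apply ciSup_le
      intro j
      rw [le_div_iff₀ h1l, mul_comm]
      have h := (hconstr j l θ hl hlθ hθ).2
      have h1 := Sθ_le j
      have h2 := Slt_le j
      nlinarith
    linarith
end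

section
/- Fix d ≥ 1, κ with 0 ≤ κ ≤ d, and 0 < c₁ ≤ c₂ ≤ √c₁ < 1 with c₁ > 0. Let h : [0,1] → [0,d] be the unique continuous piecewise-linear function with slope 0 on [0,c₁] ∪ [c₂, c₁/c₂], slope -κ on [c₁,c₂] ∪ [c₁/c₂, 1], and h(1) = 0. Then for all 0 < λ < θ < 1, one has h(λ) - h(θ) ≤ θ · h(λ/θ). -/
set_option maxHeartbeats 4000000 in
private lemma aux13 (c₁ c₂ u θ v l : ℝ)
    (hc₁ : 0 < c₁) (hc12 : c₁ ≤ c₂) (hc2u : c₂ ≤ u) (hu1 : u ≤ 1)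
    (huc : u * c₂ = c₁) (hθ0 : 0 < θ) (hθ1 : θ < 1)
    (hv0 : 0 < v) (hv1 : v < 1) (hl : l = v * θ) :
    (if l ≤ c₁ then 1 - u + c₂ - c₁ else if l ≤ c₂ then 1 - u + c₂ - l
      else if l ≤ u then 1 - u else 1 - l)
    - (if θ ≤ c₁ then 1 - u + c₂ - c₁ else if θ ≤ c₂ then 1 - u + c₂ - θ
      else if θ ≤ u then 1 - u else 1 - θ)
    ≤ θ * (if v ≤ c₁ then 1 - u + c₂ - c₁ else if v ≤ c₂ then 1 - u + c₂ - v
      else if v ≤ u then 1 - u else 1 - v) := by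
  have hc20 : 0 < c₂ := lt_of_lt_of_le hc₁ hc12
  have hlθ : l < θ := by nlinarith
  have hlv : l ≤ v := by nlinarith
  split_ifs <;> first
    | linarith
    | nlinarith [mul_pos hθ0 hv0, mul_le_mul_of_nonneg_left hv1.le hθ0.le,
        mul_le_mul_of_nonneg_left hc2u hθ0.le, mul_le_mul_of_nonneg_left hu1 hθ0.le,
        mul_le_mul_of_nonneg_left hc12 hθ0.le]

/-- the piecewise-linear function h (slope 0 on [0,c₁] ∪ [c₂, c₁/c₂],
slope -κ on [c₁,c₂] ∪ [c₁/c₂,1], h(1)=0) satisfies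
h(λ) - h(θ) ≤ θ·h(λ/θ) for all 0 < λ < θ < 1. -/
theorem stmt_13 (d : ℕ) (hd : 1 ≤ d) (κ c₁ c₂ : ℝ)
    (hκ0 : 0 ≤ κ) (hκd : κ ≤ d) (hc₁ : 0 < c₁) (hc12 : c₁ ≤ c₂)
    (hc2sq : c₂ ≤ Real.sqrt c₁) (hc2 : Real.sqrt c₁ < 1)
    (h : ℝ → ℝ)
    (hh : ∀ θ : ℝ, h θ =
      if θ ≤ c₁ then κ * (1 - c₁ / c₂ + c₂ - c₁)
      else if θ ≤ c₂ then κ * (1 - c₁ / c₂ + c₂ - θ)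
      else if θ ≤ c₁ / c₂ then κ * (1 - c₁ / c₂)
      else κ * (1 - θ)) :
    ∀ l θ : ℝ, 0 < l → l < θ → θ < 1 → h l - h θ ≤ θ * h (l / θ) := by
  intro l θ hl0 hlθ hθ1
  have hθ0 : 0 < θ := lt_trans hl0 hlθ
  have hc20 : 0 < c₂ := lt_of_lt_of_le hc₁ hc12
  have hsq : c₂ ^ 2 ≤ c₁ := by
    have := Real.sq_sqrt hc₁.le
    nlinarith [Real.sqrt_nonneg c₁]
  have huc : (c₁ / c₂) * c₂ = c₁ := div_mul_cancel₀ _ (ne_of_gt hc20)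
  have hc2u : c₂ ≤ c₁ / c₂ := by
    rw [le_div_iff₀ hc20]; nlinarith
  have hu1 : c₁ / c₂ ≤ 1 := by
    rw [div_le_one hc20]; exact hc12
  have hv0 : 0 < l / θ := div_pos hl0 hθ0
  have hv1 : l / θ < 1 := (div_lt_one hθ0).mpr hlθ
  have hlv : l = (l / θ) * θ := (div_mul_cancel₀ _ (ne_of_gt hθ0)).symm
  have hhg : ∀ x : ℝ, h x = κ *
      (if x ≤ c₁ then 1 - c₁ / c₂ + c₂ - c₁ else if x ≤ c₂ then 1 - c₁ / c₂ + c₂ - x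
        else if x ≤ c₁ / c₂ then 1 - c₁ / c₂ else 1 - x) := by
    intro x; rw [hh x]; split_ifs <;> ring
  have key := aux13 c₁ c₂ (c₁ / c₂) θ (l / θ) l hc₁ hc12 hc2u hu1 huc hθ0 hθ1 hv0 hv1 hlv
  rw [hhg l, hhg θ, hhg (l / θ)]
  nlinarith [mul_le_mul_of_nonneg_left key hκ0]
end

section
/- Let d ≥ 1, let φ : (0,1) → [0,d] satisfy 0 ≤ (1-λ)φ(λ) - (1-θ)φ(θ) ≤ (θ-λ)φ(λ/θ) for all 0 < λ < θ < 1, and suppose M = lim_{θ→1⁻} φ(θ) exists with φ(θ) ≤ M for all θ. Define ξ(y) = (1-e^{-y})φ(e^{-y}) for y > 0 and, for a constant z ∈ ℝ, set f(y) = ξ(y) + e^{-y}·z. Then for all y > 0, t > 0: f(y)·e^{-t} ≤ f(y+t) ≤ (1 - e^{-t})·M + f(y)·e^{-t}. -/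
/-- with ξ(y) = (1-e^{-y})φ(e^{-y}) and f(y) = ξ(y) + e^{-y}·z,
one has f(y)e^{-t} ≤ f(y+t) ≤ (1-e^{-t})M + f(y)e^{-t} for all y, t > 0. -/
theorem stmt_15 (d : ℕ) (hd : 1 ≤ d) (φ : ℝ → ℝ) (M : ℝ)
    (hrange : ∀ θ : ℝ, 0 < θ → θ < 1 → 0 ≤ φ θ ∧ φ θ ≤ d)
    (hconstr : ∀ l θ : ℝ, 0 < l → l < θ → θ < 1 →
      0 ≤ (1 - l) * φ l - (1 - θ) * φ θ ∧
      (1 - l) * φ l - (1 - θ) * φ θ ≤ (θ - l) * φ (l / θ))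
    (hlim : Filter.Tendsto φ (nhdsWithin 1 (Set.Ioo 0 1)) (nhds M))
    (hub : ∀ θ : ℝ, 0 < θ → θ < 1 → φ θ ≤ M)
    (z : ℝ) (f : ℝ → ℝ)
    (hf : ∀ y : ℝ, f y = (1 - Real.exp (-y)) * φ (Real.exp (-y)) + Real.exp (-y) * z) :
    ∀ y t : ℝ, 0 < y → 0 < t →
      f y * Real.exp (-t) ≤ f (y + t) ∧
      f (y + t) ≤ (1 - Real.exp (-t)) * M + f y * Real.exp (-t) := by
  intro y t hy ht
  set a := Real.exp (-(y + t)) with ha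
  set b := Real.exp (-y) with hb
  set c := Real.exp (-t) with hc
  have hapos : 0 < a := Real.exp_pos _
  have hbpos : 0 < b := Real.exp_pos _
  have hcpos : 0 < c := Real.exp_pos _
  have hb1 : b < 1 := by
    rw [hb]; exact Real.exp_lt_one_iff.mpr (by linarith)
  have hc1 : c < 1 := by
    rw [hc]; exact Real.exp_lt_one_iff.mpr (by linarith)
  have habc : a = b * c := by
    rw [ha, hb, hc, ← Real.exp_add]; ring_nf
  have hab : a < b := by
    rw [habc]; nlinarith
  have hdiv : a / b = c := by
    rw [habc]; field_simp
  obtain ⟨h1, h2⟩ := hconstr a b hapos hab hb1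
  rw [hdiv] at h2
  have hMb : φ b ≤ M := hub b hbpos hb1
  have hMc : φ c ≤ M := hub c hcpos hc1
  have hφb0 : 0 ≤ φ b := (hrange b hbpos hb1).1
  rw [hf, hf]
  rw [← ha, ← hb]
  have expand : ((1 - b) * φ b + b * z) * c = (1 - b) * φ b * c + a * z := by
    rw [habc]; ring
  constructor
  · -- lower bound: ((1-b)φ b + b z) c ≤ (1-a)φ a + a z
    have key : (1 - b) * φ b * c ≤ (1 - a) * φ a := by
      have h3 : (1 - b) * φ b * c ≤ (1 - b) * φ b := by
        nlinarith [mul_nonneg (by linarith : (0:ℝ) ≤ 1 - b) hφb0]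
      linarith
    rw [expand]; linarith [key]
  · -- upper: (1-a)φ a + a z ≤ (1-c) M + ((1-b)φ b + b z) c
    have key : (1 - a) * φ a ≤ (1 - c) * M + (1 - b) * φ b * c := by
      have h4 : (1 - a) * φ a ≤ (1 - b) * φ b + (b - a) * M := by
        nlinarith [hMc, (by linarith : (0:ℝ) ≤ b - a)]
      have h5 : (1 - b) * φ b ≤ (1 - b) * M := by
        nlinarith [(by linarith : (0:ℝ) ≤ 1 - b)]
      nlinarith [habc, h5, (by linarith : (0:ℝ) ≤ 1 - c)]
    rw [expand]; linarith [key]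
end

section
/- Let d ≥ 1 and let φ : (0,1) → [0,d] satisfy 0 ≤ (1-λ)φ(λ) - (1-θ)φ(θ) ≤ (θ-λ)φ(λ/θ) for all 0 < λ < θ < 1. Define the running supremum Φ(θ) = sup_{0 < θ' ≤ θ} φ(θ'). Then Φ also satisfies the same constraint: 0 ≤ (1-λ)Φ(λ) - (1-θ)Φ(θ) ≤ (θ-λ)Φ(λ/θ) for all 0 < λ < θ < 1. -/
/-! The running supremum `Φ` is nondecreasing, so the upper half of the constraint for `Φ` follows
from `Φ l ≤ Φ θ` and `Φ l ≤ Φ (l / θ)`. The lower half says that `θ ↦ (1 - θ) φ θ` is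
nonincreasing; this passes to `Φ` because for `l ≤ θ` and `θ' ≤ θ` the value `(1 - θ) φ θ'` is at
most `(1 - l) Φ l`: if `θ' ≤ l` since `φ ≥ 0`, and otherwise since `(1 - θ') φ θ' ≤ (1 - l) φ l`. -/

open Set

noncomputable def runningSup (φ : ℝ → ℝ) (θ : ℝ) : ℝ := sSup (φ '' Ioc 0 θ)

theorem MonotoneOn.one_sub_mul_sub_le {Ψ : ℝ → ℝ} (hΨ : MonotoneOn Ψ (Ioo 0 1)) {l θ : ℝ}
    (hl : 0 < l) (hlθ : l < θ) (hθ : θ < 1) :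
    (1 - l) * Ψ l - (1 - θ) * Ψ θ ≤ (θ - l) * Ψ (l / θ) := by
  have hθ0 : 0 < θ := hl.trans hlθ
  have hl_mem : l ∈ Ioo (0 : ℝ) 1 := ⟨hl, hlθ.trans hθ⟩
  have hle_θ : Ψ l ≤ Ψ θ := hΨ hl_mem ⟨hθ0, hθ⟩ hlθ.le
  have hle_div : Ψ l ≤ Ψ (l / θ) :=
    hΨ hl_mem ⟨by positivity, (div_lt_one hθ0).2 hlθ⟩ ((le_div_iff₀ hθ0).2 (by nlinarith))
  calc (1 - l) * Ψ l - (1 - θ) * Ψ θ ≤ (1 - l) * Ψ l - (1 - θ) * Ψ l := by gcongr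
    _ = (θ - l) * Ψ l := by ring
    _ ≤ (θ - l) * Ψ (l / θ) := by gcongr

namespace runningSup

variable {φ : ℝ → ℝ}

theorem bddAbove_image_Ioc (hbdd : BddAbove (φ '' Ioo 0 1)) {θ : ℝ} (hθ : θ < 1) :
    BddAbove (φ '' Ioc 0 θ) :=
  hbdd.mono (image_mono (Ioc_subset_Ioo_right hθ))

theorem le_runningSup (hbdd : BddAbove (φ '' Ioo 0 1)) {t θ : ℝ} (ht : 0 < t) (htθ : t ≤ θ)
    (hθ : θ < 1) : φ t ≤ runningSup φ θ :=
  le_csSup (bddAbove_image_Ioc hbdd hθ) (mem_image_of_mem φ ⟨ht, htθ⟩)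

theorem monotoneOn (hbdd : BddAbove (φ '' Ioo 0 1)) : MonotoneOn (runningSup φ) (Ioo 0 1) :=
  fun _ hs _ ht hst =>
    csSup_le_csSup (bddAbove_image_Ioc hbdd ht.2) ((nonempty_Ioc.2 hs.1).image φ)
      (image_mono (Ioc_subset_Ioc_right hst))

theorem antitoneOn_one_sub_mul (hbdd : BddAbove (φ '' Ioo 0 1))
    (hφ : ∀ t ∈ Ioo (0 : ℝ) 1, 0 ≤ φ t) (hanti : AntitoneOn (fun t => (1 - t) * φ t) (Ioo 0 1)) :
    AntitoneOn (fun t => (1 - t) * runningSup φ t) (Ioo 0 1) := by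
  intro l hl θ hθ hlθ
  have hpos : 0 < 1 - θ := sub_pos.2 hθ.2
  rw [← le_div_iff₀' hpos]
  refine csSup_le ((nonempty_Ioc.2 hθ.1).image φ) ?_
  rintro _ ⟨y, ⟨hy0, hyθ⟩, rfl⟩
  have hy : y ∈ Ioo (0 : ℝ) 1 := ⟨hy0, hyθ.trans_lt hθ.2⟩
  have hφy := hφ y hy
  rw [le_div_iff₀' hpos]
  have hl1 : 0 ≤ 1 - l := sub_nonneg.2 hl.2.le
  rcases le_or_gt y l with hyl | hly
  · calc (1 - θ) * φ y ≤ (1 - l) * φ y := by gcongr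
      _ ≤ (1 - l) * runningSup φ l := by gcongr; exact le_runningSup hbdd hy0 hyl hl.2
  · calc (1 - θ) * φ y ≤ (1 - y) * φ y := by gcongr
      _ ≤ (1 - l) * φ l := hanti hl hy hly.le
      _ ≤ (1 - l) * runningSup φ l := by gcongr; exact le_runningSup hbdd hl.1 le_rfl hl.2

end runningSup

theorem stmt_17_general (d : ℕ) (φ : ℝ → ℝ)
    (hrange : ∀ θ : ℝ, 0 < θ → θ < 1 → 0 ≤ φ θ ∧ φ θ ≤ d)
    (hconstr : ∀ l θ : ℝ, 0 < l → l < θ → θ < 1 →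
      0 ≤ (1 - l) * φ l - (1 - θ) * φ θ ∧
      (1 - l) * φ l - (1 - θ) * φ θ ≤ (θ - l) * φ (l / θ))
    (Φ : ℝ → ℝ) (hΦ : ∀ θ : ℝ, Φ θ = sSup (φ '' Set.Ioc 0 θ)) :
    ∀ l θ : ℝ, 0 < l → l < θ → θ < 1 →
      0 ≤ (1 - l) * Φ l - (1 - θ) * Φ θ ∧
      (1 - l) * Φ l - (1 - θ) * Φ θ ≤ (θ - l) * Φ (l / θ) := by
  obtain rfl : Φ = runningSup φ := funext hΦ
  have hbdd : BddAbove (φ '' Ioo 0 1) := ⟨d, by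
    rintro _ ⟨t, ht, rfl⟩
    exact (hrange t ht.1 ht.2).2⟩
  have hanti : AntitoneOn (fun t => (1 - t) * φ t) (Ioo 0 1) := by
    intro l hl θ hθ hlθ
    rcases hlθ.lt_or_eq with hlθ | rfl
    · exact sub_nonneg.1 (hconstr l θ hl.1 hlθ hθ.2).1
    · exact le_rfl
  have hΦanti := runningSup.antitoneOn_one_sub_mul hbdd (fun t ht => (hrange t ht.1 ht.2).1) hanti
  intro l θ hl hlθ hθ
  exact ⟨sub_nonneg.2 (hΦanti ⟨hl, hlθ.trans hθ⟩ ⟨hl.trans hlθ, hθ⟩ hlθ.le),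
    (runningSup.monotoneOn hbdd).one_sub_mul_sub_le hl hlθ hθ⟩

/-- the running supremum Φ(θ) = sup_{0<θ'≤θ} φ(θ') of a function
in 𝒜_d again satisfies the 𝒜_d constraint. -/
theorem stmt_17 (d : ℕ) (hd : 1 ≤ d) (φ : ℝ → ℝ)
    (hrange : ∀ θ : ℝ, 0 < θ → θ < 1 → 0 ≤ φ θ ∧ φ θ ≤ d)
    (hconstr : ∀ l θ : ℝ, 0 < l → l < θ → θ < 1 →
      0 ≤ (1 - l) * φ l - (1 - θ) * φ θ ∧
      (1 - l) * φ l - (1 - θ) * φ θ ≤ (θ - l) * φ (l / θ))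
    (Φ : ℝ → ℝ) (hΦ : ∀ θ : ℝ, Φ θ = sSup (φ '' Set.Ioc 0 θ)) :
    ∀ l θ : ℝ, 0 < l → l < θ → θ < 1 →
      0 ≤ (1 - l) * Φ l - (1 - θ) * Φ θ ∧
      (1 - l) * Φ l - (1 - θ) * Φ θ ≤ (θ - l) * Φ (l / θ) :=
  stmt_17_general d φ hrange hconstr Φ hΦ
end

section
/- Let F ⊆ ℝ^d be a bounded set and for θ ∈ (0,1) let dim_A^θ F denote the Assouad spectrum of F. Then for all 0 < θ₁ < θ₂ < 1: (1-θ₁)·dim_A^{θ₁} F ≤ (θ₂-θ₁)·dim_A^{θ₁/θ₂} F + (1-θ₂)·dim_A^{θ₂} F, and (1-θ₂)·dim_A^{θ₂} F ≤ (1-θ₁)·dim_A^{θ₁} F. -/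
/-- The covering number `N_δ(E)`: the least cardinality of a finite set of
centres whose open `δ`-balls cover `E`. -/
noncomputable def coverNumber {X : Type*} [MetricSpace X] (E : Set X) (δ : ℝ) : ℕ :=
  sInf {n : ℕ | ∃ S : Finset X, S.card = n ∧ E ⊆ ⋃ x ∈ S, Metric.ball x δ}

/-- The Assouad spectrum `dim_A^θ F` of a set `F ⊆ ℝ^d`. -/
noncomputable def assouadSpectrum {d : ℕ} (F : Set (EuclideanSpace ℝ (Fin d)))
    (θ : ℝ) : ℝ :=
  sInf {α : ℝ | 0 ≤ α ∧ ∃ C : ℝ, 0 < C ∧ ∀ δ : ℝ, 0 < δ → δ ≤ 1 →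
    ∀ x ∈ F, (coverNumber (F ∩ Metric.ball x δ) (δ ^ ((1 : ℝ) / θ)) : ℝ)
      ≤ C * (δ / δ ^ ((1 : ℝ) / θ)) ^ α}

/-!
Both inequalities compare covering numbers across scales. Monotonicity: the `θ₁`-bound at the
larger scale `δ' = δ ^ (θ₁ / θ₂) ≥ δ` has the same small radius `δ' ^ (1 / θ₁) = δ ^ (1 / θ₂)`,
and `(δ' / δ' ^ (1 / θ₁)) ^ α = (δ / δ ^ (1 / θ₂)) ^ ((1 - θ₁) / (1 - θ₂) * α)`. Interpolation:
cover `F ∩ B(x, δ)` by `≲ (δ / ρ) ^ α` balls of radius `ρ = δ ^ (θ₂ / θ₁)`, using the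
`θ₁ / θ₂`-spectrum; each piece lies in a ball `B(y, 2ρ)` with `y ∈ F`, which needs
`≲ (2ρ / (2ρ) ^ (1 / θ₂)) ^ β` balls of radius `(2ρ) ^ (1 / θ₂) ≍ δ ^ (1 / θ₁)`, using the
`θ₂`-spectrum. The exponents of `δ` add up to `(1 - 1 / θ₁) * γ` with
`(1 - θ₁) γ = (θ₂ - θ₁) α + (1 - θ₂) β`. Finite dimensionality enters only through the doubling
bound `N_s(B(x, r)) ≤ (3r / s) ^ d` (a volume count of a maximal `s`-separated subset), which
controls the changes of scale by bounded factors.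
-/

open Metric Bornology MeasureTheory Module Pointwise

section MetricSpace

variable {X : Type*} [MetricSpace X]

lemma coverNumber_le_card {E : Set X} {δ : ℝ} {S : Finset X} (h : E ⊆ ⋃ x ∈ S, ball x δ) :
    coverNumber E δ ≤ S.card :=
  Nat.sInf_le ⟨S, rfl, h⟩

lemma coverNumber_empty (δ : ℝ) : coverNumber (∅ : Set X) δ = 0 :=
  Nat.le_zero.1 (coverNumber_le_card (S := ∅) (Set.empty_subset _))

variable [ProperSpace X]

lemma exists_finset_card_eq_coverNumber {E : Set X} (hE : IsBounded E) {δ : ℝ} (hδ : 0 < δ) :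
    ∃ S : Finset X, S.card = coverNumber E δ ∧ E ⊆ ⋃ x ∈ S, ball x δ := by
  obtain ⟨t, ht, hcov⟩ := totallyBounded_iff.1
    (hE.isCompact_closure.totallyBounded.subset subset_closure) δ hδ
  exact Nat.sInf_mem (s := {n | ∃ S : Finset X, S.card = n ∧ E ⊆ ⋃ x ∈ S, ball x δ})
    ⟨_, ht.toFinset, rfl, by simpa using hcov⟩

lemma coverNumber_mono {E E' : Set X} (h : E ⊆ E') (hE' : IsBounded E') {δ : ℝ} (hδ : 0 < δ) :
    coverNumber E δ ≤ coverNumber E' δ := by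
  obtain ⟨S, hS, hcov⟩ := exists_finset_card_eq_coverNumber hE' hδ
  exact hS ▸ coverNumber_le_card (h.trans hcov)

lemma coverNumber_le_mul {E : Set X} (hE : IsBounded E) {ρ s M : ℝ} (hρ : 0 < ρ) (hs : 0 < s)
    (hM : ∀ c, (coverNumber (E ∩ ball c ρ) s : ℝ) ≤ M) :
    (coverNumber E s : ℝ) ≤ coverNumber E ρ * M := by
  classical
  obtain ⟨S, hS, hcovS⟩ := exists_finset_card_eq_coverNumber hE hρ
  choose T hT hcovT using fun c =>
    exists_finset_card_eq_coverNumber (hE.subset (Set.inter_subset_left (t := ball c ρ))) hs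
  have hcov : E ⊆ ⋃ z ∈ S.biUnion T, ball z s := by
    intro e he
    obtain ⟨c, hc, hec⟩ := Set.mem_iUnion₂.1 (hcovS he)
    obtain ⟨z, hz, hez⟩ := Set.mem_iUnion₂.1 (hcovT c ⟨he, hec⟩)
    exact Set.mem_iUnion₂.2 ⟨z, Finset.mem_biUnion.2 ⟨c, hc, hz⟩, hez⟩
  calc (coverNumber E s : ℝ) ≤ (S.biUnion T).card := by exact_mod_cast coverNumber_le_card hcov
    _ ≤ ∑ c ∈ S, ((T c).card : ℝ) := by exact_mod_cast Finset.card_biUnion_le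
    _ ≤ ∑ _c ∈ S, M := Finset.sum_le_sum fun c _ => hT c ▸ hM c
    _ = coverNumber E ρ * M := by rw [Finset.sum_const, nsmul_eq_mul, hS]

lemma coverNumber_inter_ball_le_mul {F : Set X} {x : X} (hx : x ∈ F) {δ ρ s M : ℝ}
    (hρ : 0 < ρ) (hs : 0 < s) (hM : ∀ y ∈ F, (coverNumber (F ∩ ball y (2 * ρ)) s : ℝ) ≤ M) :
    (coverNumber (F ∩ ball x δ) s : ℝ) ≤ coverNumber (F ∩ ball x δ) ρ * M := by
  refine coverNumber_le_mul (isBounded_ball.subset Set.inter_subset_right) hρ hs fun c => ?_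
  rcases (F ∩ ball x δ ∩ ball c ρ).eq_empty_or_nonempty with hempty | ⟨y, ⟨hyF, -⟩, hyc⟩
  · rw [hempty, coverNumber_empty, Nat.cast_zero]
    exact (Nat.cast_nonneg _).trans (hM x hx)
  refine le_trans ?_ (hM y hyF)
  refine mod_cast coverNumber_mono ?_ (isBounded_ball.subset Set.inter_subset_right) hs
  rintro e ⟨⟨heF, -⟩, hec⟩
  refine ⟨heF, ?_⟩
  rw [mem_ball] at hec hyc ⊢
  linarith [dist_triangle_right e y c]

end MetricSpace

section FiniteDimensional

variable {E : Type*} [NormedAddCommGroup E] [NormedSpace ℝ E] [FiniteDimensional ℝ E]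

lemma card_le_of_subset_ball_of_pairwise_le_dist {x : E} {r s : ℝ} (hr : 0 ≤ r) (hs : 0 < s)
    {T : Finset E} (hT : (T : Set E) ⊆ ball x r)
    (hsep : (T : Set E).Pairwise fun a b => s ≤ dist a b) :
    (T.card : ℝ) ≤ (2 * r / s + 1) ^ finrank ℝ E := by
  -- the disjoint balls `ball c (s / 2)` fit in `ball x (r + s / 2)`: compare Haar volumes
  borelize E
  set μ : Measure E := Measure.addHaar
  have hs2 : 0 < s / 2 := half_pos hs
  have hdisj : (T : Set E).PairwiseDisjoint fun c => ball c (s / 2) :=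
    fun a ha b hb hab => ball_disjoint_ball (by linarith [hsep ha hb hab])
  have hsub : (⋃ c ∈ T, ball c (s / 2)) ⊆ ball x (r + s / 2) :=
    Set.iUnion₂_subset fun c hc => ball_subset_ball' (by linarith [mem_ball.1 (hT hc)])
  have hvol : (T.card : ENNReal) * ENNReal.ofReal ((s / 2) ^ finrank ℝ E) * μ (ball 0 1) ≤
      ENNReal.ofReal ((r + s / 2) ^ finrank ℝ E) * μ (ball 0 1) := by
    calc _ = μ (⋃ c ∈ T, ball c (s / 2)) := by
          rw [measure_biUnion_finset hdisj fun c _ => measurableSet_ball]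
          simp [μ.addHaar_ball_of_pos _ hs2, mul_assoc]
      _ ≤ μ (ball x (r + s / 2)) := measure_mono hsub
      _ = _ := μ.addHaar_ball_of_pos _ (by linarith)
  have hvol' := (ENNReal.mul_le_mul_iff_left (measure_ball_pos μ (0 : E) one_pos).ne'
    measure_ball_lt_top.ne).1 hvol
  rw [← ENNReal.ofReal_natCast, ← ENNReal.ofReal_mul (by positivity),
    ENNReal.ofReal_le_ofReal_iff (by positivity)] at hvol'
  calc (T.card : ℝ) = T.card * (s / 2) ^ finrank ℝ E / (s / 2) ^ finrank ℝ E := by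
        field_simp
    _ ≤ (r + s / 2) ^ finrank ℝ E / (s / 2) ^ finrank ℝ E := by gcongr
    _ = (2 * r / s + 1) ^ finrank ℝ E := by
        rw [← div_pow]; congr 1; field_simp

lemma exists_finset_card_le_ball_subset_biUnion_ball (x : E) {r s : ℝ} (hr : 0 ≤ r) (hs : 0 < s) :
    ∃ T : Finset E, (T.card : ℝ) ≤ (2 * r / s + 1) ^ finrank ℝ E ∧
      ball x r ⊆ ⋃ c ∈ T, ball c s := by
  classical
  let sizes := {n : ℕ | ∃ T : Finset E, (T : Set E) ⊆ ball x r ∧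
    (T : Set E).Pairwise (fun a b => s ≤ dist a b) ∧ T.card = n}
  have hbdd : BddAbove sizes := ⟨⌊(2 * r / s + 1) ^ finrank ℝ E⌋₊, by
    rintro _ ⟨T, hT, hsep, rfl⟩
    exact Nat.le_floor (card_le_of_subset_ball_of_pairwise_le_dist hr hs hT hsep)⟩
  -- a separated family of maximal size is a cover: an uncovered point could be added to it
  obtain ⟨T, hT, hsep, hcard⟩ : sSup sizes ∈ sizes :=
    Nat.sSup_mem ⟨0, ∅, by simp, by simp, rfl⟩ hbdd
  refine ⟨T, card_le_of_subset_ball_of_pairwise_le_dist hr hs hT hsep, fun y hy => ?_⟩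
  by_contra hy'
  simp only [Set.mem_iUnion, mem_ball, not_exists, not_lt] at hy'
  have hyT : y ∉ T := fun h => (hy' y h).not_gt (by simpa using hs)
  have hsub : ((insert y T : Finset E) : Set E) ⊆ ball x r := by
    rw [Finset.coe_insert]; exact Set.insert_subset hy hT
  have hsep' : ((insert y T : Finset E) : Set E).Pairwise fun a b => s ≤ dist a b := by
    rw [Finset.coe_insert]
    exact hsep.insert_of_notMem hyT fun b hb => ⟨hy' b hb, dist_comm y b ▸ hy' b hb⟩
  have := le_csSup hbdd ⟨insert y T, hsub, hsep', rfl⟩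
  rw [Finset.card_insert_of_notMem hyT] at this
  omega

lemma coverNumber_ball_le (x : E) {r s : ℝ} (hs : 0 < s) (hsr : s ≤ r) :
    (coverNumber (ball x r) s : ℝ) ≤ (3 * (r / s)) ^ finrank ℝ E := by
  obtain ⟨T, hT, hcov⟩ := exists_finset_card_le_ball_subset_biUnion_ball x (hs.le.trans hsr) hs
  have hrs : 1 ≤ r / s := (one_le_div hs).2 hsr
  rw [mul_div_assoc] at hT
  calc (coverNumber (ball x r) s : ℝ) ≤ T.card := mod_cast coverNumber_le_card hcov
    _ ≤ (2 * (r / s) + 1) ^ finrank ℝ E := hT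
    _ ≤ (3 * (r / s)) ^ finrank ℝ E := pow_le_pow_left₀ (by linarith) (by linarith) _

lemma coverNumber_le_mul_of_le {A : Set E} (hA : IsBounded A) {s s' : ℝ} (hs : 0 < s)
    (hss' : s ≤ s') :
    (coverNumber A s : ℝ) ≤ coverNumber A s' * (3 * (s' / s)) ^ finrank ℝ E :=
  coverNumber_le_mul hA (hs.trans_le hss') hs fun c =>
    le_trans (mod_cast coverNumber_mono Set.inter_subset_right isBounded_ball hs)
      (coverNumber_ball_le c hs hss')

end FiniteDimensional

lemma self_div_rpow {δ : ℝ} (hδ : 0 < δ) (a : ℝ) : δ / δ ^ a = δ ^ (1 - a) := by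
  rw [Real.rpow_sub hδ, Real.rpow_one]

lemma self_div_rpow_rpow {δ : ℝ} (hδ : 0 < δ) (a α : ℝ) :
    (δ / δ ^ a) ^ α = δ ^ ((1 - a) * α) := by
  rw [Real.rpow_mul hδ.le, self_div_rpow hδ]

lemma rpow_one_div_le_self {δ θ : ℝ} (hδ : 0 < δ) (hδ1 : δ ≤ 1) (hθ : 0 < θ) (hθ1 : θ ≤ 1) :
    δ ^ ((1 : ℝ) / θ) ≤ δ := by
  simpa using Real.rpow_le_rpow_of_exponent_ge hδ hδ1 (one_le_one_div hθ hθ1)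

lemma two_mul_rpow_one_div_le_one {δ q : ℝ} (hq : 0 < q) (hδ : 0 ≤ δ) (hδq : δ ≤ (1 / 2) ^ q) :
    2 * δ ^ ((1 : ℝ) / q) ≤ 1 := by
  have := Real.rpow_le_rpow hδ hδq (one_div_pos.2 hq).le
  rw [← Real.rpow_mul (by norm_num), mul_one_div_cancel hq.ne', Real.rpow_one] at this
  linarith

lemma two_scales_exponent_eq {θ₁ θ₂ : ℝ} (h0 : θ₁ ≠ 0) (hθ₂ : θ₂ ≠ 0) (h1 : 1 - θ₁ ≠ 0) (α β : ℝ) :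
    (1 - 1 / (θ₁ / θ₂)) * α + 1 / (θ₁ / θ₂) * ((1 - 1 / θ₂) * β) =
      (1 - 1 / θ₁) * (((θ₂ - θ₁) * α + (1 - θ₂) * β) / (1 - θ₁)) := by
  field_simp
  ring

def assouadSpectrumSet {X : Type*} [MetricSpace X] (F : Set X) (θ : ℝ) : Set ℝ :=
  {α : ℝ | 0 ≤ α ∧ ∃ C : ℝ, 0 < C ∧ ∀ δ : ℝ, 0 < δ → δ ≤ 1 →
    ∀ x ∈ F, (coverNumber (F ∩ ball x δ) (δ ^ ((1 : ℝ) / θ)) : ℝ)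
      ≤ C * (δ / δ ^ ((1 : ℝ) / θ)) ^ α}

lemma assouadSpectrum_eq_sInf {d : ℕ} (F : Set (EuclideanSpace ℝ (Fin d))) (θ : ℝ) :
    assouadSpectrum F θ = sInf (assouadSpectrumSet F θ) :=
  rfl

lemma bddBelow_assouadSpectrumSet {X : Type*} [MetricSpace X] (F : Set X) (θ : ℝ) :
    BddBelow (assouadSpectrumSet F θ) :=
  ⟨0, fun _ hα => hα.1⟩

lemma mul_mem_assouadSpectrumSet_of_le {X : Type*} [MetricSpace X] [ProperSpace X] {F : Set X}
    {θ₁ θ₂ α : ℝ} (h0 : 0 < θ₁) (h12 : θ₁ ≤ θ₂) (h1 : θ₂ < 1)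
    (hα : α ∈ assouadSpectrumSet F θ₁) :
    (1 - θ₁) / (1 - θ₂) * α ∈ assouadSpectrumSet F θ₂ := by
  obtain ⟨hα0, C, hC, hbound⟩ := hα
  have hθ₂ : 0 < θ₂ := h0.trans_le h12
  have h1θ₁ : 0 < 1 - θ₁ := by linarith
  have h1θ₂ : 0 < 1 - θ₂ := by linarith
  refine ⟨by positivity, C, hC, fun δ hδ hδ1 x hx => ?_⟩
  set δ' := δ ^ (θ₁ / θ₂)
  have hδ' : 0 < δ' := Real.rpow_pos_of_pos hδ _
  have hradius : δ' ^ ((1 : ℝ) / θ₁) = δ ^ ((1 : ℝ) / θ₂) := by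
    rw [← Real.rpow_mul hδ.le]
    congr 1
    field_simp
  have hδδ' : δ ≤ δ' := by
    simpa using Real.rpow_le_rpow_of_exponent_ge hδ hδ1 ((div_le_one hθ₂).2 h12)
  calc (coverNumber (F ∩ ball x δ) (δ ^ ((1 : ℝ) / θ₂)) : ℝ)
      ≤ coverNumber (F ∩ ball x δ') (δ' ^ ((1 : ℝ) / θ₁)) := by
        rw [hradius]
        exact mod_cast coverNumber_mono (Set.inter_subset_inter_right F (ball_subset_ball hδδ'))
          (isBounded_ball.subset Set.inter_subset_right) (Real.rpow_pos_of_pos hδ _)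
    _ ≤ C * (δ' / δ' ^ ((1 : ℝ) / θ₁)) ^ α :=
        hbound δ' hδ' (Real.rpow_le_one hδ.le hδ1 (by positivity)) x hx
    _ = C * (δ / δ ^ ((1 : ℝ) / θ₂)) ^ ((1 - θ₁) / (1 - θ₂) * α) := by
        rw [self_div_rpow_rpow hδ', self_div_rpow_rpow hδ, ← Real.rpow_mul hδ.le]
        congr 2
        field_simp
        ring

section FiniteDimensional

variable {E : Type*} [NormedAddCommGroup E] [NormedSpace ℝ E] [FiniteDimensional ℝ E]

lemma coverNumber_inter_ball_rpow_le (F : Set E) (x : E) {δ θ : ℝ} (hδ : 0 < δ) (hδ1 : δ ≤ 1)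
    (hθ : 0 < θ) (hθ1 : θ ≤ 1) :
    (coverNumber (F ∩ ball x δ) (δ ^ ((1 : ℝ) / θ)) : ℝ) ≤
      (3 * (δ / δ ^ ((1 : ℝ) / θ))) ^ finrank ℝ E :=
  le_trans (mod_cast coverNumber_mono Set.inter_subset_right isBounded_ball
      (Real.rpow_pos_of_pos hδ _))
    (coverNumber_ball_le x (Real.rpow_pos_of_pos hδ _) (rpow_one_div_le_self hδ hδ1 hθ hθ1))

lemma finrank_mem_assouadSpectrumSet (F : Set E) {θ : ℝ} (hθ : 0 < θ) (hθ1 : θ ≤ 1) :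
    (finrank ℝ E : ℝ) ∈ assouadSpectrumSet F θ := by
  refine ⟨Nat.cast_nonneg _, 3 ^ finrank ℝ E, by positivity, fun δ hδ hδ1 x _ => ?_⟩
  rw [Real.rpow_natCast, ← mul_pow]
  exact coverNumber_inter_ball_rpow_le F x hδ hδ1 hθ hθ1

/-- Above the scale `δ₀` the covering numbers are bounded uniformly. -/
lemma mem_assouadSpectrumSet_of_forall_le {F : Set E} {θ α δ₀ C : ℝ} (hθ : 0 < θ) (hθ1 : θ ≤ 1)
    (hα : 0 ≤ α) (hδ₀ : 0 < δ₀)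
    (h : ∀ δ, 0 < δ → δ ≤ δ₀ → ∀ x ∈ F,
      (coverNumber (F ∩ ball x δ) (δ ^ ((1 : ℝ) / θ)) : ℝ) ≤ C * (δ / δ ^ ((1 : ℝ) / θ)) ^ α) :
    α ∈ assouadSpectrumSet F θ := by
  set K := (3 * δ₀ ^ (1 - (1 : ℝ) / θ)) ^ finrank ℝ E
  refine ⟨hα, max C K, lt_max_of_lt_right (by positivity), fun δ hδ hδ1 x hx => ?_⟩
  have hratio : 1 ≤ δ / δ ^ ((1 : ℝ) / θ) :=
    (one_le_div (Real.rpow_pos_of_pos hδ _)).2 (rpow_one_div_le_self hδ hδ1 hθ hθ1)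
  rcases le_or_gt δ δ₀ with hsmall | hlarge
  · exact (h δ hδ hsmall x hx).trans (by gcongr; exact le_max_left C K)
  calc (coverNumber (F ∩ ball x δ) (δ ^ ((1 : ℝ) / θ)) : ℝ)
      ≤ (3 * (δ / δ ^ ((1 : ℝ) / θ))) ^ finrank ℝ E :=
        coverNumber_inter_ball_rpow_le F x hδ hδ1 hθ hθ1
    _ ≤ K := by
        refine pow_le_pow_left₀ (by positivity) (mul_le_mul_of_nonneg_left ?_ (by norm_num)) _
        rw [self_div_rpow hδ]
        exact Real.rpow_le_rpow_of_nonpos hδ₀ hlarge.le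
          (by linarith [one_le_one_div hθ hθ1])
    _ ≤ max C K * (δ / δ ^ ((1 : ℝ) / θ)) ^ α :=
        (le_max_right C K).trans
          (le_mul_of_one_le_right (by positivity) (Real.one_le_rpow hratio hα))

lemma coverNumber_inter_ball_le_of_forall_le {F : Set E} {θ β C : ℝ}
    (h : ∀ δ, 0 < δ → δ ≤ 1 → ∀ x ∈ F,
      (coverNumber (F ∩ ball x δ) (δ ^ ((1 : ℝ) / θ)) : ℝ) ≤ C * (δ / δ ^ ((1 : ℝ) / θ)) ^ β)
    {y : E} (hy : y ∈ F) {t s : ℝ} (ht : 0 < t) (ht1 : t ≤ 1) (hs : 0 < s)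
    (hst : s ≤ t ^ ((1 : ℝ) / θ)) :
    (coverNumber (F ∩ ball y t) s : ℝ) ≤
      C * (t / t ^ ((1 : ℝ) / θ)) ^ β * (3 * (t ^ ((1 : ℝ) / θ) / s)) ^ finrank ℝ E := by
  calc (coverNumber (F ∩ ball y t) s : ℝ)
      ≤ coverNumber (F ∩ ball y t) (t ^ ((1 : ℝ) / θ)) *
          (3 * (t ^ ((1 : ℝ) / θ) / s)) ^ finrank ℝ E :=
        coverNumber_le_mul_of_le (isBounded_ball.subset Set.inter_subset_right) hs hst
    _ ≤ _ := by
        gcongr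
        exact h t ht ht1 y hy

lemma mem_assouadSpectrumSet_of_two_scales {F : Set E} {θ₁ θ₂ α β : ℝ} (h0 : 0 < θ₁)
    (h12 : θ₁ ≤ θ₂) (h1 : θ₂ < 1) (hα : α ∈ assouadSpectrumSet F (θ₁ / θ₂))
    (hβ : β ∈ assouadSpectrumSet F θ₂) :
    ((θ₂ - θ₁) * α + (1 - θ₂) * β) / (1 - θ₁) ∈ assouadSpectrumSet F θ₁ := by
  obtain ⟨hα0, C, hC, hboundα⟩ := hα
  obtain ⟨hβ0, C', hC', hboundβ⟩ := hβ
  have hθ₂ : 0 < θ₂ := h0.trans_le h12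
  have h1θ₁ : 0 < 1 - θ₁ := by linarith
  set γ := ((θ₂ - θ₁) * α + (1 - θ₂) * β) / (1 - θ₁)
  have hγ0 : 0 ≤ γ :=
    div_nonneg (add_nonneg (mul_nonneg (by linarith) hα0) (mul_nonneg (by linarith) hβ0)) h1θ₁.le
  set e := (1 - 1 / θ₂) * β
  set K : ℝ := (3 * 2 ^ ((1 : ℝ) / θ₂)) ^ finrank ℝ E
  -- `δ ≤ δ₀` makes the intermediate scale `ρ` at most `1 / 2`
  refine mem_assouadSpectrumSet_of_forall_le h0 (by linarith) hγ0
    (δ₀ := (1 / 2) ^ (θ₁ / θ₂)) (C := C * C' * 2 ^ e * K) (by positivity)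
    fun δ hδ hδ₀ x hx => ?_
  have hδ1 : δ ≤ 1 := hδ₀.trans (Real.rpow_le_one (by norm_num) (by norm_num) (by positivity))
  have hs : 0 < δ ^ ((1 : ℝ) / θ₁) := Real.rpow_pos_of_pos hδ _
  set ρ := δ ^ ((1 : ℝ) / (θ₁ / θ₂))
  have hρ : 0 < ρ := Real.rpow_pos_of_pos hδ _
  have hρ2 : 2 * ρ ≤ 1 := two_mul_rpow_one_div_le_one (by positivity) hδ.le hδ₀
  have hscale : (2 * ρ) ^ ((1 : ℝ) / θ₂) = 2 ^ ((1 : ℝ) / θ₂) * δ ^ ((1 : ℝ) / θ₁) := by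
    rw [Real.mul_rpow (by norm_num) hρ.le, ← Real.rpow_mul hδ.le]
    congr 2
    field_simp
  have hM : ∀ y ∈ F, (coverNumber (F ∩ ball y (2 * ρ)) (δ ^ ((1 : ℝ) / θ₁)) : ℝ) ≤
      C' * (2 * ρ / (2 * ρ) ^ ((1 : ℝ) / θ₂)) ^ β * K := by
    intro y hy
    have hst : δ ^ ((1 : ℝ) / θ₁) ≤ (2 * ρ) ^ ((1 : ℝ) / θ₂) := by
      rw [hscale]
      exact le_mul_of_one_le_left hs.le (Real.one_le_rpow (by norm_num) (by positivity))
    have hratio : (2 * ρ) ^ ((1 : ℝ) / θ₂) / δ ^ ((1 : ℝ) / θ₁) = 2 ^ ((1 : ℝ) / θ₂) := by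
      rw [hscale, mul_div_cancel_right₀ _ hs.ne']
    have := coverNumber_inter_ball_le_of_forall_le hboundβ hy (by positivity) hρ2 hs hst
    rwa [hratio] at this
  have hexp : (1 - 1 / (θ₁ / θ₂)) * α + 1 / (θ₁ / θ₂) * e = (1 - 1 / θ₁) * γ :=
    two_scales_exponent_eq h0.ne' hθ₂.ne' h1θ₁.ne' α β
  calc (coverNumber (F ∩ ball x δ) (δ ^ ((1 : ℝ) / θ₁)) : ℝ)
      ≤ coverNumber (F ∩ ball x δ) ρ * (C' * (2 * ρ / (2 * ρ) ^ ((1 : ℝ) / θ₂)) ^ β * K) :=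
        coverNumber_inter_ball_le_mul hx hρ hs hM
    _ ≤ C * (δ / ρ) ^ α * (C' * (2 * ρ / (2 * ρ) ^ ((1 : ℝ) / θ₂)) ^ β * K) := by
        gcongr
        exact hboundα δ hδ hδ1 x hx
    _ = C * C' * 2 ^ e * K * (δ / δ ^ ((1 : ℝ) / θ₁)) ^ γ := by
        rw [self_div_rpow_rpow hδ, self_div_rpow_rpow hδ, self_div_rpow_rpow (by positivity),
          Real.mul_rpow (by norm_num) hρ.le, ← Real.rpow_mul hδ.le, ← hexp, Real.rpow_add hδ]
        ring

lemma assouadSpectrumSet_nonempty (F : Set E) {θ : ℝ} (hθ : 0 < θ) (hθ1 : θ ≤ 1) :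
    (assouadSpectrumSet F θ).Nonempty :=
  ⟨_, finrank_mem_assouadSpectrumSet F hθ hθ1⟩

lemma one_sub_mul_sInf_assouadSpectrumSet_le_add (F : Set E) {θ₁ θ₂ : ℝ} (h0 : 0 < θ₁)
    (h12 : θ₁ ≤ θ₂) (h1 : θ₂ < 1) :
    (1 - θ₁) * sInf (assouadSpectrumSet F θ₁) ≤
      (θ₂ - θ₁) * sInf (assouadSpectrumSet F (θ₁ / θ₂)) +
        (1 - θ₂) * sInf (assouadSpectrumSet F θ₂) := by
  have hθ₂ : 0 < θ₂ := h0.trans_le h12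
  have hc₁ : 0 ≤ 1 - θ₁ := by linarith
  have hc₂ : 0 ≤ 1 - θ₂ := by linarith
  have hc₁₂ : 0 ≤ θ₂ - θ₁ := by linarith
  have hne₁₂ := assouadSpectrumSet_nonempty F (div_pos h0 hθ₂) ((div_le_one hθ₂).2 h12)
  have hne₂ := assouadSpectrumSet_nonempty F hθ₂ h1.le
  have hbdd := bddBelow_assouadSpectrumSet F
  have hsub : (θ₂ - θ₁) • assouadSpectrumSet F (θ₁ / θ₂) + (1 - θ₂) • assouadSpectrumSet F θ₂ ⊆
      (1 - θ₁) • assouadSpectrumSet F θ₁ := by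
    rintro _ ⟨_, ⟨α, hα, rfl⟩, _, ⟨β, hβ, rfl⟩, rfl⟩
    refine ⟨_, mem_assouadSpectrumSet_of_two_scales h0 h12 h1 hα hβ, ?_⟩
    simp only [smul_eq_mul]
    field_simp [show 1 - θ₁ ≠ 0 by linarith]
  calc (1 - θ₁) * sInf (assouadSpectrumSet F θ₁)
      = sInf ((1 - θ₁) • assouadSpectrumSet F θ₁) := (Real.sInf_smul_of_nonneg hc₁ _).symm
    _ ≤ sInf ((θ₂ - θ₁) • assouadSpectrumSet F (θ₁ / θ₂) + (1 - θ₂) • assouadSpectrumSet F θ₂) :=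
        csInf_le_csInf ((hbdd _).smul_of_nonneg hc₁) (hne₁₂.smul_set.add hne₂.smul_set) hsub
    _ = _ := by
        rw [csInf_add hne₁₂.smul_set ((hbdd _).smul_of_nonneg hc₁₂) hne₂.smul_set
          ((hbdd _).smul_of_nonneg hc₂), Real.sInf_smul_of_nonneg hc₁₂,
          Real.sInf_smul_of_nonneg hc₂, smul_eq_mul, smul_eq_mul]

lemma one_sub_mul_sInf_assouadSpectrumSet_le_of_le (F : Set E) {θ₁ θ₂ : ℝ} (h0 : 0 < θ₁)
    (h12 : θ₁ ≤ θ₂) (h1 : θ₂ < 1) :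
    (1 - θ₂) * sInf (assouadSpectrumSet F θ₂) ≤ (1 - θ₁) * sInf (assouadSpectrumSet F θ₁) := by
  have hc₂ : 0 < 1 - θ₂ := by linarith
  have hsub : ((1 - θ₁) / (1 - θ₂)) • assouadSpectrumSet F θ₁ ⊆ assouadSpectrumSet F θ₂ := by
    rintro _ ⟨α, hα, rfl⟩
    exact mul_mem_assouadSpectrumSet_of_le h0 h12 h1 hα
  have hle := csInf_le_csInf (bddBelow_assouadSpectrumSet F θ₂)
    (assouadSpectrumSet_nonempty F h0 (by linarith)).smul_set hsub
  rw [Real.sInf_smul_of_nonneg (div_nonneg (by linarith) hc₂.le), smul_eq_mul,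
    div_mul_eq_mul_div, le_div_iff₀ hc₂] at hle
  linarith

end FiniteDimensional

theorem stmt_19_general (d : ℕ) (F : Set (EuclideanSpace ℝ (Fin d))) (θ₁ θ₂ : ℝ)
    (h0 : 0 < θ₁) (h12 : θ₁ < θ₂) (h1 : θ₂ < 1) :
    (1 - θ₁) * assouadSpectrum F θ₁ ≤
      (θ₂ - θ₁) * assouadSpectrum F (θ₁ / θ₂) + (1 - θ₂) * assouadSpectrum F θ₂ ∧
    (1 - θ₂) * assouadSpectrum F θ₂ ≤ (1 - θ₁) * assouadSpectrum F θ₁ := by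
  simp only [assouadSpectrum_eq_sInf]
  exact ⟨one_sub_mul_sInf_assouadSpectrumSet_le_add F h0 h12.le h1,
    one_sub_mul_sInf_assouadSpectrumSet_le_of_le F h0 h12.le h1⟩

/-- for bounded F ⊆ ℝ^d and 0 < θ₁ < θ₂ < 1, the Assouad spectrum
satisfies the two-sided constraint defining the class 𝒜_d. -/
theorem stmt_19 (d : ℕ) (hd : 1 ≤ d) (F : Set (EuclideanSpace ℝ (Fin d)))
    (hF : Bornology.IsBounded F) (θ₁ θ₂ : ℝ)
    (h0 : 0 < θ₁) (h12 : θ₁ < θ₂) (h1 : θ₂ < 1) :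
    (1 - θ₁) * assouadSpectrum F θ₁ ≤
      (θ₂ - θ₁) * assouadSpectrum F (θ₁ / θ₂) + (1 - θ₂) * assouadSpectrum F θ₂ ∧
    (1 - θ₂) * assouadSpectrum F θ₂ ≤ (1 - θ₁) * assouadSpectrum F θ₁ :=
  stmt_19_general d F θ₁ θ₂ h0 h12 h1
end
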